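/- arXiv:1910.02431 — 8 statements merged into one kernel-verified Lean document; each statement's English description precedes it below -/
import Mathlib

section
/- Let G be a connected graph of diameter at least 4. Then there exists a minimum edge dominating set of G that contains no leaf edges (edges incident to a vertex of degree 1). -/
open SimpleGraph

variable {V : Type*}

/-- Two edges (as unordered pairs) are adjacent: distinct and sharing an endpoint. -/
def eAdj (e f : Sym2 V) : Prop := e ≠ f ∧ ∃ v, v ∈ e ∧ v ∈ f

/-- `F` is an edge dominating set of `G`. -/
def IsEDS (G : SimpleGraph V) (F : Set (Sym2 V)) : Prop :=
  F ⊆ G.edgeSet ∧ ∀ e ∈ G.edgeSet, e ∉ F → ∃ f ∈ F, eAdj e f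

/-- `F` is a total edge dominating set of `G`. -/
def IsTEDS (G : SimpleGraph V) (F : Set (Sym2 V)) : Prop :=
  F ⊆ G.edgeSet ∧ ∀ e ∈ G.edgeSet, ∃ f ∈ F, eAdj e f

/-- The edge domination number γ'(G). -/
noncomputable def edsNum (G : SimpleGraph V) : ℕ :=
  sInf {n | ∃ F : Set (Sym2 V), IsEDS G F ∧ F.ncard = n}

/-- The total edge domination number γ'_t(G). -/
noncomputable def tedsNum (G : SimpleGraph V) : ℕ :=
  sInf {n | ∃ F : Set (Sym2 V), IsTEDS G F ∧ F.ncard = n}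

/-- A leaf edge: an edge with an endpoint of degree 1. -/
def IsLeafEdge (G : SimpleGraph V) [∀ v : V, Fintype (G.neighborSet v)] (e : Sym2 V) : Prop :=
  e ∈ G.edgeSet ∧ ∃ v ∈ e, G.degree v = 1

/-!
Among the minimum edge dominating sets choose one, `F`, with the fewest leaf edges, and suppose
it contains a leaf edge `uv` with `deg v = 1`. By the triangle inequality and the diameter bound,
some vertex lies at distance at least 2 from `u`, so the second vertex `w` of a shortest path
towards it is a neighbour of `u` of degree at least 2. Replacing `uv` by `uw` keeps `F` dominating (the only edge
met by `uv` at `v` is `uv` itself) without enlarging it, and `uw` is not a leaf edge because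
`deg u ≥ 2` too: one leaf edge fewer, a contradiction.
-/

namespace SimpleGraph

variable {G : SimpleGraph V} {u v w x : V}

lemma one_lt_degree_of_adj_of_adj [Fintype (G.neighborSet v)] (hu : G.Adj v u) (hw : G.Adj v w)
    (hne : u ≠ w) : 1 < G.degree v :=
  Finset.one_lt_card.2 ⟨u, by simpa using hu, w, by simpa using hw, hne⟩

lemma eq_mk_of_degree_eq_one [Fintype (G.neighborSet v)] (hv : G.degree v = 1)
    (huv : G.Adj u v) {e : Sym2 V} (he : e ∈ G.edgeSet) (hve : v ∈ e) : e = s(u, v) := by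
  obtain ⟨z, rfl⟩ := Sym2.mem_iff_exists.1 hve
  obtain ⟨_, -, huniq⟩ := degree_eq_one_iff_existsUnique_adj.1 hv
  rw [huniq z he, ← huniq u huv.symm, Sym2.eq_swap]

lemma exists_adj_one_lt_degree_of_two_le_dist [G.LocallyFinite] (h : 2 ≤ G.dist u x) :
    ∃ w, G.Adj u w ∧ 1 < G.degree w := by
  have hreach : G.Reachable u x := Reachable.of_dist_ne_zero (by omega)
  obtain ⟨p, hp⟩ := hreach.exists_walk_length_eq_dist
  match p, hp with
  | .nil, hp => simp only [Walk.length_nil] at hp; omega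
  | .cons _ .nil, hp => simp only [Walk.length_cons, Walk.length_nil] at hp; omega
  | .cons huw (.cons hwc q), hp =>
    refine ⟨_, huw, one_lt_degree_of_adj_of_adj huw.symm hwc ?_⟩
    rintro rfl
    have := G.dist_le q
    simp only [Walk.length_cons] at hp
    omega

lemma exists_two_le_dist_of_three_le_diam (hdiam : 3 ≤ G.diam) (u : V) : ∃ x, 2 ≤ G.dist u x := by
  have : Nonempty V := ⟨u⟩
  obtain ⟨x, y, hxy⟩ := G.exists_dist_eq_diam
  have hconn := connected_of_ediam_ne_top (G := G) (ediam_ne_top_of_diam_ne_zero (by omega))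
  have htri : G.dist x y ≤ G.dist u x + G.dist u y := G.dist_comm (u := x) ▸ hconn.dist_triangle
  by_cases hx : 2 ≤ G.dist u x
  · exact ⟨x, hx⟩
  · exact ⟨y, by omega⟩

end SimpleGraph

lemma Set.ncard_insert_sdiff_singleton_le {α : Type*} {s : Set α} {a : α} (b : α) (ha : a ∈ s)
    (hs : s.Finite) : (insert b (s \ {a})).ncard ≤ s.ncard :=
  (Set.ncard_insert_le b _).trans (Set.ncard_sdiff_singleton_add_one ha hs).le

lemma Set.ncard_sep_insert_sdiff_singleton_lt {α : Type*} {s : Set α} {P : α → Prop} {a b : α}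
    (hs : s.Finite) (ha : a ∈ s) (hPa : P a) (hPb : ¬ P b) :
    {x ∈ insert b (s \ {a}) | P x}.ncard < {x ∈ s | P x}.ncard := by
  refine Set.ncard_lt_ncard (LE.le.ssubset_of_mem_notMem ?_ ⟨ha, hPa⟩ ?_) (hs.sep P)
  · rintro x ⟨rfl | ⟨hxs, -⟩, hPx⟩
    exacts [absurd hPx hPb, ⟨hxs, hPx⟩]
  · rintro ⟨rfl | ⟨-, hne⟩, -⟩
    exacts [hPb hPa, hne rfl]

section EdgeDomination

variable {G : SimpleGraph V} {u v w : V} {F : Set (Sym2 V)}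

lemma edsNum_le_ncard (hF : IsEDS G F) : edsNum G ≤ F.ncard :=
  Nat.sInf_le ⟨F, hF, rfl⟩

lemma exists_isEDS_ncard_eq_edsNum (G : SimpleGraph V) : ∃ F, IsEDS G F ∧ F.ncard = edsNum G :=
  Nat.sInf_mem (s := {n | ∃ F : Set (Sym2 V), IsEDS G F ∧ F.ncard = n})
    ⟨_, G.edgeSet, ⟨subset_rfl, fun _ he he' => absurd he he'⟩, rfl⟩

lemma IsEDS.insert_sdiff_of_degree_eq_one [Fintype (G.neighborSet v)] (hF : IsEDS G F)
    (hv : G.degree v = 1) (huv : G.Adj u v) (huw : G.Adj u w) :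
    IsEDS G (insert s(u, w) (F \ {s(u, v)})) := by
  refine ⟨Set.insert_subset huw (Set.sdiff_subset.trans hF.1), fun e he heF' => ?_⟩
  have hne : e ≠ s(u, w) := fun h => heF' (h ▸ Set.mem_insert _ _)
  have dominated_at_u : u ∈ e → ∃ f ∈ insert s(u, w) (F \ {s(u, v)}), eAdj e f :=
    fun hu => ⟨_, Set.mem_insert _ _, hne, u, hu, Sym2.mem_mk_left u w⟩
  by_cases hev : e = s(u, v)
  · exact dominated_at_u (hev ▸ Sym2.mem_mk_left u v)
  obtain ⟨f, hfF, hef⟩ := hF.2 e he fun h => heF' (Set.mem_insert_of_mem _ ⟨h, hev⟩)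
  by_cases hfv : f = s(u, v)
  · subst hfv
    obtain ⟨-, z, hze, hzf⟩ := hef
    rcases Sym2.mem_iff.1 hzf with rfl | rfl
    · exact dominated_at_u hze
    · exact absurd (eq_mk_of_degree_eq_one hv huv he hze) hev
  · exact ⟨f, Set.mem_insert_of_mem _ ⟨hfF, hfv⟩, hef⟩

lemma IsLeafEdge.exists_eq_mk [G.LocallyFinite] {e : Sym2 V} (he : IsLeafEdge G e) :
    ∃ u v, G.Adj u v ∧ G.degree v = 1 ∧ e = s(u, v) := by
  obtain ⟨he, v, hve, hv⟩ := he
  obtain ⟨u, rfl⟩ := Sym2.mem_iff_exists.1 hve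
  exact ⟨u, v, G.adj_symm he, hv, Sym2.eq_swap⟩

lemma not_isLeafEdge_mk [G.LocallyFinite] (hu : 1 < G.degree u) (hw : 1 < G.degree w) :
    ¬ IsLeafEdge G s(u, w) := by
  rintro ⟨-, z, hz, hdeg⟩
  rcases Sym2.mem_iff.1 hz with rfl | rfl <;> omega

end EdgeDomination

theorem stmt6_general {V : Type*} [Fintype V] (G : SimpleGraph V) [DecidableRel G.Adj]
    (hdiam : 4 ≤ G.diam) :
    ∃ F : Set (Sym2 V), IsEDS G F ∧ F.ncard = edsNum G ∧
      ∀ e ∈ F, ¬ IsLeafEdge G e := by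
  obtain ⟨F, ⟨hF, hFcard⟩, hFmin⟩ := Set.exists_min_image {F | IsEDS G F ∧ F.ncard = edsNum G}
    (fun F => {e ∈ F | IsLeafEdge G e}.ncard) (Set.toFinite _) (exists_isEDS_ncard_eq_edsNum G)
  refine ⟨F, hF, hFcard, fun e heF he => ?_⟩
  obtain ⟨u, v, huv, hv, rfl⟩ := he.exists_eq_mk
  obtain ⟨x, hx⟩ := exists_two_le_dist_of_three_le_diam (G := G) (by omega) u
  obtain ⟨w, huw, hw⟩ := exists_adj_one_lt_degree_of_two_le_dist hx
  have hwv : w ≠ v := by rintro rfl; omega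
  have hF' := hF.insert_sdiff_of_degree_eq_one hv huv huw
  have hF'card : (insert s(u, w) (F \ {s(u, v)})).ncard = edsNum G :=
    le_antisymm (hFcard ▸ Set.ncard_insert_sdiff_singleton_le _ heF F.toFinite)
      (edsNum_le_ncard hF')
  have hle := hFmin _ ⟨hF', hF'card⟩
  have hlt := Set.ncard_sep_insert_sdiff_singleton_lt F.toFinite heF he
    (not_isLeafEdge_mk (one_lt_degree_of_adj_of_adj huv huw hwv.symm) hw)
  exact hle.not_gt hlt

theorem stmt6 {V : Type*} [Fintype V] [DecidableEq V] (G : SimpleGraph V) [DecidableRel G.Adj]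
    (hc : G.Connected) (hdiam : 4 ≤ G.diam) :
    ∃ F : Set (Sym2 V), IsEDS G F ∧ F.ncard = edsNum G ∧
      ∀ e ∈ F, ¬ IsLeafEdge G e :=
  stmt6_general G hdiam
end

section
/- Let G be a connected graph of diameter at least 4. Then there exists a minimum total edge dominating set of G containing no leaf edges. -/
open SimpleGraph

variable {V : Type*}

/-!
Take a minimum total edge dominating set `F` with as few leaf edges as possible, and suppose it
contains a leaf edge `vu` with `deg v = 1`. Every edge adjacent to `vu` passes through `u`; in
particular so does the edge `g ∈ F` dominating `vu`, and `g` dominates every other such edge. Hence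
`F - vu + f` is again total edge dominating for any edge `f` adjacent to `g`, and has at most
`|F|` edges. When the diameter is at least `4`, some edge `f` adjacent to `g` is not a leaf edge:
otherwise every vertex would lie within distance `1` of an endpoint of `g`. The exchange lowers the
number of leaf edges, a contradiction.
-/

lemma eAdj.symm {e f : Sym2 V} (h : eAdj e f) : eAdj f e :=
  ⟨h.1.symm, let ⟨v, he, hf⟩ := h.2; ⟨v, hf, he⟩⟩

namespace SimpleGraph

variable {G : SimpleGraph V}

lemma Connected.mem_of_forall_adj_mem (hc : G.Connected) {S : Set V} {u : V} (hu : u ∈ S)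
    (hS : ∀ x ∈ S, ∀ y, G.Adj x y → y ∈ S) (a : V) : a ∈ S := by
  by_contra ha
  obtain ⟨d, -, hd, hd'⟩ := (hc u a).some.exists_boundary_dart S hu ha
  exact hd' (hS _ hd _ d.adj)

lemma ediam_le_of_forall_eq_or_adj {S : Set V} {d : ℕ∞}
    (hS : ∀ x ∈ S, ∀ y ∈ S, G.edist x y ≤ d) (hdom : ∀ a, ∃ x ∈ S, x = a ∨ G.Adj x a) :
    G.ediam ≤ 1 + d + 1 := by
  have hnear : ∀ a, ∃ x ∈ S, G.edist a x ≤ 1 := fun a ↦ by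
    obtain ⟨x, hx, rfl | hxa⟩ := hdom a
    · exact ⟨x, hx, by simp⟩
    · exact ⟨x, hx, (edist_eq_one_iff_adj.mpr hxa.symm).le⟩
  refine ediam_le_of_edist_le fun a b ↦ ?_
  obtain ⟨x, hx, hax⟩ := hnear a
  obtain ⟨y, hy, hby⟩ := hnear b
  calc G.edist a b ≤ G.edist a y + G.edist y b := SimpleGraph.edist_triangle
    _ ≤ G.edist a x + G.edist x y + G.edist y b := by gcongr; exact SimpleGraph.edist_triangle
    _ ≤ 1 + d + 1 := by
        rw [edist_comm (u := y)]
        gcongr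
        exact hS x hx y hy

lemma eq_of_degree_eq_one [∀ v, Fintype (G.neighborSet v)] {v a b : V} (hv : G.degree v = 1)
    (ha : G.Adj v a) (hb : G.Adj v b) : a = b :=
  (degree_eq_one_iff_existsUnique_adj.mp hv).unique ha hb

lemma mem_of_eAdj_of_degree_eq_one [∀ v, Fintype (G.neighborSet v)] {v u : V} {h : Sym2 V}
    (hv : G.degree v = 1) (hvu : G.Adj v u) (hh : h ∈ G.edgeSet) (hadj : eAdj h s(v, u)) :
    u ∈ h := by
  obtain ⟨hne, c, hch, hc⟩ := hadj
  rcases Sym2.mem_iff.mp hc with rfl | rfl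
  · obtain ⟨z, rfl⟩ := Sym2.mem_iff_exists.mp hch
    exact (hne (by rw [eq_of_degree_eq_one hv (G.mem_edgeSet.mp hh) hvu])).elim
  · exact hch

lemma exists_eAdj_not_isLeafEdge [∀ v, Fintype (G.neighborSet v)] (hc : G.Connected)
    (hdiam : 4 ≤ G.diam) {e : Sym2 V} (he : e ∈ G.edgeSet) :
    ∃ f ∈ G.edgeSet, eAdj e f ∧ ¬ IsLeafEdge G f := by
  induction e using Sym2.ind with | _ u w => ?_
  by_contra! hleaf
  have huw : G.Adj u w := he
  set S : Set V := {u, w}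
  have hpend : ∀ x ∈ S, ∀ a, G.Adj x a → a ∉ S → G.degree a = 1 := by
    intro x hx a hxa haS
    have hne : s(u, w) ≠ s(x, a) := fun h ↦
      haS (by simpa [S] using (h ▸ Sym2.mem_mk_right x a : a ∈ s(u, w)))
    -- `s(x, a)` is a leaf edge, and `x` has two neighbours, `a` and the other vertex of `S`
    obtain ⟨-, z, hz, hdz⟩ := hleaf _ hxa ⟨hne, x, by simpa [S] using hx, Sym2.mem_mk_left x a⟩
    rcases Sym2.mem_iff.mp hz with rfl | rfl
    · rcases hx with rfl | rfl
      · exact (haS (by simp [S, eq_of_degree_eq_one hdz hxa huw])).elim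
      · exact (haS (by simp [S, eq_of_degree_eq_one hdz hxa huw.symm])).elim
    · exact hdz
  have hdom : ∀ a, ∃ x ∈ S, x = a ∨ G.Adj x a := by
    refine hc.mem_of_forall_adj_mem (S := {a | ∃ x ∈ S, x = a ∨ G.Adj x a})
      ⟨u, by simp [S], Or.inl rfl⟩ ?_
    rintro b ⟨x, hx, rfl | hxb⟩ y hby
    · exact ⟨x, hx, Or.inr hby⟩
    · by_cases hbS : b ∈ S
      · exact ⟨b, hbS, Or.inr hby⟩
      · exact ⟨x, hx, Or.inl (eq_of_degree_eq_one (hpend x hx b hxb hbS) hxb.symm hby)⟩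
  have hS : ∀ x ∈ S, ∀ y ∈ S, G.edist x y ≤ 1 := by
    rintro x (rfl | rfl) y (rfl | rfl) <;>
      simp [edist_eq_one_iff_adj.mpr huw, edist_eq_one_iff_adj.mpr huw.symm]
  have hdiam3 : G.diam ≤ 3 := ENat.toNat_le_of_le_natCast (ediam_le_of_forall_eq_or_adj hS hdom)
  omega

lemma isTEDS_edgeSet [∀ v, Fintype (G.neighborSet v)] (hc : G.Connected) (hdiam : 4 ≤ G.diam) :
    IsTEDS G G.edgeSet :=
  ⟨subset_rfl, fun _ he ↦
    (exists_eAdj_not_isLeafEdge hc hdiam he).imp fun _ h ↦ ⟨h.1, h.2.1⟩⟩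

end SimpleGraph

section TotalEdgeDomination

variable {G : SimpleGraph V} {F : Set (Sym2 V)}

lemma IsTEDS.tedsNum_le (hF : IsTEDS G F) : tedsNum G ≤ F.ncard :=
  Nat.sInf_le ⟨F, hF, rfl⟩

lemma IsTEDS.exists_ncard_eq_tedsNum (hF : IsTEDS G F) :
    ∃ F', IsTEDS G F' ∧ F'.ncard = tedsNum G :=
  Nat.sInf_mem (s := {n | ∃ F : Set (Sym2 V), IsTEDS G F ∧ F.ncard = n}) ⟨_, F, hF, rfl⟩

lemma IsTEDS.insert_sdiff_of_degree_eq_one [∀ v, Fintype (G.neighborSet v)] {u v : V}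
    {f g : Sym2 V} (hF : IsTEDS G F) (hv : G.degree v = 1) (hvu : G.Adj v u) (hg : g ∈ F)
    (hge : eAdj g s(v, u)) (hf : f ∈ G.edgeSet) (hgf : eAdj g f) :
    IsTEDS G (insert f (F \ {s(v, u)})) := by
  refine ⟨Set.insert_subset hf (Set.sdiff_subset.trans hF.1), fun h hh ↦ ?_⟩
  obtain ⟨f₀, hf₀, hhf₀⟩ := hF.2 h hh
  by_cases hf₀e : f₀ = s(v, u)
  · subst hf₀e
    by_cases hhg : h = g
    · exact ⟨f, Set.mem_insert _ _, hhg ▸ hgf⟩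
    · exact ⟨g, Or.inr ⟨hg, hge.1⟩, hhg, u, mem_of_eAdj_of_degree_eq_one hv hvu hh hhf₀,
        mem_of_eAdj_of_degree_eq_one hv hvu (hF.1 hg) hge⟩
  · exact ⟨f₀, Or.inr ⟨hf₀, hf₀e⟩, hhf₀⟩

lemma exists_minimum_isTEDS_with_fewer_leafEdges [Finite V] [∀ v, Fintype (G.neighborSet v)]
    (hc : G.Connected) (hdiam : 4 ≤ G.diam) (hF : IsTEDS G F) (hFmin : F.ncard = tedsNum G)
    {e : Sym2 V} (heF : e ∈ F) (he : IsLeafEdge G e) :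
    ∃ F', IsTEDS G F' ∧ F'.ncard = tedsNum G ∧
      {x ∈ F' | IsLeafEdge G x}.ncard < {x ∈ F | IsLeafEdge G x}.ncard := by
  obtain ⟨heE, v, hve, hv⟩ := he
  obtain ⟨u, rfl⟩ := Sym2.mem_iff_exists.mp hve
  obtain ⟨g, hgF, hge⟩ := hF.2 _ heE
  obtain ⟨f, hfE, hgf, hf⟩ := exists_eAdj_not_isLeafEdge hc hdiam (hF.1 hgF)
  have hF' := hF.insert_sdiff_of_degree_eq_one hv heE hgF hge.symm hfE hgf
  refine ⟨_, hF', le_antisymm ?_ hF'.tedsNum_le, ?_⟩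
  · calc (insert f (F \ {s(v, u)})).ncard ≤ (F \ {s(v, u)}).ncard + 1 := Set.ncard_insert_le _ _
      _ = tedsNum G := by rw [Set.ncard_sdiff_singleton_add_one heF, hFmin]
  · calc {x ∈ insert f (F \ {s(v, u)}) | IsLeafEdge G x}.ncard
        ≤ ({x ∈ F | IsLeafEdge G x} \ {s(v, u)}).ncard := by
          refine Set.ncard_le_ncard ?_
          rintro x ⟨rfl | ⟨hxF, hxe⟩, hx⟩
          · exact (hf hx).elim
          · exact ⟨⟨hxF, hx⟩, hxe⟩
      _ < {x ∈ F | IsLeafEdge G x}.ncard :=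
          Set.ncard_sdiff_singleton_lt_of_mem ⟨heF, heE, v, hve, hv⟩

end TotalEdgeDomination

theorem stmt7_general {V : Type*} [Fintype V] (G : SimpleGraph V) [DecidableRel G.Adj]
    (hc : G.Connected) (hdiam : 4 ≤ G.diam) :
    ∃ F : Set (Sym2 V), IsTEDS G F ∧ F.ncard = tedsNum G ∧
      ∀ e ∈ F, ¬ IsLeafEdge G e := by
  obtain ⟨F, ⟨hF, hFmin⟩, hleast⟩ :=
    Set.exists_min_image {F | IsTEDS G F ∧ F.ncard = tedsNum G}
      (fun F ↦ {e ∈ F | IsLeafEdge G e}.ncard) (Set.toFinite _)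
      (isTEDS_edgeSet hc hdiam).exists_ncard_eq_tedsNum
  refine ⟨F, hF, hFmin, fun e heF he ↦ ?_⟩
  obtain ⟨F', hF', hF'min, hlt⟩ :=
    exists_minimum_isTEDS_with_fewer_leafEdges hc hdiam hF hFmin heF he
  exact (hleast F' ⟨hF', hF'min⟩).not_gt hlt

theorem stmt7 {V : Type*} [Fintype V] [DecidableEq V] (G : SimpleGraph V) [DecidableRel G.Adj]
    (hc : G.Connected) (hdiam : 4 ≤ G.diam) :
    ∃ F : Set (Sym2 V), IsTEDS G F ∧ F.ncard = tedsNum G ∧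
      ∀ e ∈ F, ¬ IsLeafEdge G e :=
  stmt7_general G hc hdiam
end

section
/- Let T be a tree of diameter exactly 4. Then γ'_t(T) = γ'(T). -/
open SimpleGraph

variable {V : Type*}

/-!
Let `c` be the midpoint of a path of length 4 between two vertices at distance 4. In a tree, two
paths from `c` leaving it through different neighbours concatenate to a geodesic, so every vertex
lies within distance 2 of `c`, and `c` has at least two non-leaf neighbours `u`. The edges `c u`
form a total edge dominating set. Conversely each such `u` carries a leaf, and dominating the leaf
edge forces an edge of any edge dominating set through `u`; as the `u` are pairwise non-adjacent,
these edges are distinct.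
-/

section

variable {G : SimpleGraph V}

lemma IsTEDS.isEDS {F : Set (Sym2 V)} (hF : IsTEDS G F) : IsEDS G F :=
  ⟨hF.1, fun e he _ => hF.2 e he⟩

lemma tedsNum_eq_edsNum_of_forall_isEDS {F : Set (Sym2 V)} (hF : IsTEDS G F)
    (hmin : ∀ F', IsEDS G F' → F.ncard ≤ F'.ncard) : tedsNum G = edsNum G := by
  have hle : tedsNum G ≤ F.ncard := Nat.sInf_le ⟨F, hF, rfl⟩
  refine le_antisymm (hle.trans ?_) ?_
  · obtain ⟨Fe, hFe, hFe_card⟩ : edsNum G ∈ {n | ∃ F, IsEDS G F ∧ F.ncard = n} :=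
      Nat.sInf_mem ⟨_, F, hF.isEDS, rfl⟩
    exact hFe_card ▸ hmin Fe hFe
  · obtain ⟨Ft, hFt, hFt_card⟩ : tedsNum G ∈ {n | ∃ F, IsTEDS G F ∧ F.ncard = n} :=
      Nat.sInf_mem ⟨_, F, hF, rfl⟩
    exact Nat.sInf_le ⟨Ft, hFt.isEDS, hFt_card⟩

lemma IsEDS.exists_mem_of_forall_adj_eq {F : Set (Sym2 V)} (hF : IsEDS G F) {u ℓ : V}
    (hadj : G.Adj u ℓ) (hleaf : ∀ z, G.Adj ℓ z → z = u) : ∃ e ∈ F, u ∈ e := by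
  by_cases hin : s(u, ℓ) ∈ F
  · exact ⟨_, hin, Sym2.mem_mk_left u ℓ⟩
  obtain ⟨f, hfF, -, z, hz, hzf⟩ := hF.2 _ hadj hin
  rcases Sym2.mem_iff.mp hz with rfl | rfl
  · exact ⟨f, hfF, hzf⟩
  · obtain ⟨z', rfl⟩ := Sym2.mem_iff_exists.mp hzf
    obtain rfl := hleaf z' (hF.1 hfF)
    exact ⟨_, hfF, Sym2.mem_mk_right _ _⟩

end

namespace SimpleGraph

variable {G : SimpleGraph V}

lemma IsIndepSet.ncard_le_ncard_of_forall_exists_mem {S : Set V} {F : Set (Sym2 V)}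
    (hS : G.IsIndepSet S) (hFG : F ⊆ G.edgeSet) (hF : F.Finite)
    (hcover : ∀ u ∈ S, ∃ e ∈ F, u ∈ e) : S.ncard ≤ F.ncard := by
  choose f hfF hmem using fun u : S => hcover u u.2
  have : Finite F := hF
  rw [← Nat.card_coe_set_eq, ← Nat.card_coe_set_eq]
  refine Nat.card_le_card_of_injective (fun u => ⟨f u, hfF u⟩) fun u u' heq => ?_
  by_contra hne
  have hne' : (u : V) ≠ u' := fun h => hne (Subtype.ext h)
  have hedge : f u = s((u : V), u') :=
    (Sym2.mem_and_mem_iff hne').mp ⟨hmem u, (Subtype.mk.inj heq) ▸ hmem u'⟩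
  exact hS u.2 u'.2 hne' (by simpa [hedge] using hFG (hfF u))

lemma Walk.snd_ne_snd_of_dist_eq_length_add_length {c x y : V} {p : G.Walk c x}
    {q : G.Walk c y} (hp : ¬p.Nil) (hq : ¬q.Nil) (h : G.dist x y = p.length + q.length) :
    p.snd ≠ q.snd := by
  intro hs
  have := dist_le (p.tail.reverse.append (q.tail.copy hs.symm rfl))
  simp only [Walk.length_append, Walk.length_reverse, Walk.length_copy] at this
  have := p.length_tail_add_one hp
  have := q.length_tail_add_one hq
  omega

lemma IsAcyclic.length_eq_dist_of_isPath (hG : G.IsAcyclic) {u v : V} {p : G.Walk u v}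
    (hp : p.IsPath) : p.length = G.dist u v := by
  obtain ⟨q, hq, hlen⟩ := p.reachable.exists_path_of_dist
  rw [← hlen, Subtype.mk.inj (hG.subsingleton_path u v |>.elim ⟨p, hp⟩ ⟨q, hq⟩)]

lemma IsAcyclic.snd_eq_snd_of_mem_support (hG : G.IsAcyclic) {u v w z : V} {p : G.Walk u v}
    {q : G.Walk u w} (hp : p.IsPath) (hq : q.IsPath) (hzp : z ∈ p.support)
    (hzq : z ∈ q.support) (hz : z ≠ u) : p.snd = q.snd := by
  classical
  have heq : p.takeUntil z hzp = q.takeUntil z hzq :=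
    Subtype.mk.inj (hG.subsingleton_path u z |>.elim ⟨_, hp.takeUntil hzp⟩ ⟨_, hq.takeUntil hzq⟩)
  rw [← Walk.snd_takeUntil hz p hzp, ← Walk.snd_takeUntil hz q hzq, heq]

lemma IsAcyclic.isPath_reverse_append (hG : G.IsAcyclic) {u v w : V} {p : G.Walk u v}
    {q : G.Walk u w} (hp : p.IsPath) (hq : q.IsPath) (hsnd : p.snd ≠ q.snd) :
    (p.reverse.append q).IsPath := by
  rw [Walk.isPath_def, Walk.support_append]
  refine List.Nodup.append hp.reverse.support_nodup hq.support_nodup.tail ?_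
  intro z hzp hzq
  have hq_nodup := hq.support_nodup
  rw [← q.cons_tail_support, List.nodup_cons] at hq_nodup
  rw [Walk.support_reverse] at hzp
  exact hsnd <| hG.snd_eq_snd_of_mem_support hp hq (List.mem_reverse.mp hzp)
    (List.mem_of_mem_tail hzq) (ne_of_mem_of_not_mem hzq hq_nodup.1)

lemma IsAcyclic.dist_eq_add_of_snd_ne (hG : G.IsAcyclic) {u v w : V} {p : G.Walk u v}
    {q : G.Walk u w} (hp : p.IsPath) (hq : q.IsPath) (hsnd : p.snd ≠ q.snd) :
    G.dist v w = p.length + q.length := by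
  rw [← hG.length_eq_dist_of_isPath (hG.isPath_reverse_append hp hq hsnd),
    Walk.length_append, Walk.length_reverse]

lemma IsTree.eq_of_adj_of_dist_add_one_eq (hT : G.IsTree) {c v w w' : V} (hw : G.Adj v w)
    (hw' : G.Adj v w') (hdw : G.dist c w + 1 = G.dist c v) (hdw' : G.dist c w' + 1 = G.dist c v) :
    w = w' := by
  -- Otherwise the geodesics from `v` to `c` through `w` and through `w'` leave `v` by different
  -- edges, so `G.dist c c` would be the sum of their lengths.
  obtain ⟨q, hq⟩ := hT.connected.exists_walk_length_eq_dist w c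
  obtain ⟨q', hq'⟩ := hT.connected.exists_walk_length_eq_dist w' c
  have hpath : ∀ {u} (huv : G.Adj v u) {r : G.Walk u c}, r.length = G.dist u c →
      G.dist c u + 1 = G.dist c v → (Walk.cons huv r).IsPath := by
    intro u huv r hr hd
    refine Walk.isPath_of_length_eq_dist _ ?_
    rw [Walk.length_cons, hr, dist_comm, hd, dist_comm]
  by_contra hne
  have := hT.isAcyclic.dist_eq_add_of_snd_ne (hpath hw hq hdw) (hpath hw' hq' hdw')
    (by simpa using hne)
  simp at this

lemma IsTree.eq_of_adj_of_forall_dist_le (hT : G.IsTree) {c ℓ u z : V}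
    (hmax : ∀ v, G.dist c v ≤ G.dist c ℓ) (hu : G.Adj ℓ u) (hz : G.Adj ℓ z) : z = u := by
  have hparent : ∀ {w}, G.Adj ℓ w → G.dist c w + 1 = G.dist c ℓ := fun {w} hw => by
    have := hmax w
    have := hT.dist_eq_dist_add_one_of_adj c hw
    omega
  exact hT.eq_of_adj_of_dist_add_one_eq hz hu (hparent hz) (hparent hu)

lemma IsTree.dist_le_of_dist_eq_of_dist_eq (hT : G.IsTree) {k : ℕ} {x y c : V}
    (hcx : G.dist c x = k) (hcy : G.dist c y = k) (hxy : G.dist x y = k + k)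
    (hdiam : ∀ u w, G.dist u w ≤ k + k) (v : V) : G.dist c v ≤ k := by
  by_contra! hv
  have hk : k ≠ 0 := by
    rintro rfl
    have := hdiam c v
    omega
  obtain ⟨px, hpx, hpx_len⟩ := hT.connected.exists_path_of_dist c x
  obtain ⟨py, hpy, hpy_len⟩ := hT.connected.exists_path_of_dist c y
  obtain ⟨q, hq, hq_len⟩ := hT.connected.exists_path_of_dist c v
  have hsnd : px.snd ≠ py.snd := Walk.snd_ne_snd_of_dist_eq_length_add_length
    (Walk.not_nil_iff_lt_length.mpr (by omega)) (Walk.not_nil_iff_lt_length.mpr (by omega))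
    (by omega)
  have hfar : ∀ {w} {p : G.Walk c w}, p.IsPath → p.length = k → q.snd ≠ p.snd → False := by
    intro w p hp hlen hne
    have := hT.isAcyclic.dist_eq_add_of_snd_ne hq hp hne
    have := hdiam v w
    omega
  by_cases h : q.snd = px.snd
  · exact hfar hpy (by omega) (h ▸ hsnd)
  · exact hfar hpx (by omega) h

def nonLeafNeighborSet (G : SimpleGraph V) (c : V) : Set V :=
  {u | G.Adj c u ∧ ∃ ℓ ≠ c, G.Adj u ℓ}

lemma IsTree.exists_forall_dist_le_two_of_diam_eq_four (hT : G.IsTree) (hdiam : G.diam = 4) :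
    ∃ c, (∀ v, G.dist c v ≤ 2) ∧ (G.nonLeafNeighborSet c).Nontrivial := by
  have : Nonempty V := hT.connected.nonempty
  have hbound : ∀ u w, G.dist u w ≤ 2 + 2 :=
    fun u w => (dist_le_diam (ediam_ne_top_of_diam_ne_zero (by omega))).trans hdiam.le
  obtain ⟨x, y, hxy⟩ := G.exists_dist_eq_diam
  obtain ⟨P, hP⟩ := hT.connected.exists_walk_length_eq_dist x y
  set c := P.getVert 2
  have hxc_le : G.dist x c ≤ 2 := (dist_le (P.take 2)).trans (by simp [Walk.take_length])
  have hcy_le : G.dist c y ≤ 2 :=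
    (dist_le (P.drop 2)).trans (by simp [Walk.drop_length, hP, hxy, hdiam])
  have := hT.connected.dist_triangle (u := x) (v := c) (w := y)
  have hcx : G.dist c x = 2 := by rw [dist_comm]; omega
  have hcy : G.dist c y = 2 := by omega
  refine ⟨c, hT.dist_le_of_dist_eq_of_dist_eq hcx hcy (by omega) hbound, ?_⟩
  have hmem : ∀ {z} (p : G.Walk c z), p.length = G.dist c z → G.dist c z = 2 →
      p.snd ∈ G.nonLeafNeighborSet c := by
    intro z p hp hz
    have hp_nil : ¬p.Nil := Walk.not_nil_iff_lt_length.mpr (by omega)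
    refine ⟨p.adj_snd hp_nil, z, ?_, Walk.adj_of_length_eq_one (p := p.tail) ?_⟩
    · rintro rfl
      simp at hz
    · have := p.length_tail_add_one hp_nil
      omega
  obtain ⟨px, hpx⟩ := hT.connected.exists_walk_length_eq_dist c x
  obtain ⟨py, hpy⟩ := hT.connected.exists_walk_length_eq_dist c y
  exact ⟨px.snd, hmem px hpx hcx, py.snd, hmem py hpy hcy,
    Walk.snd_ne_snd_of_dist_eq_length_add_length (Walk.not_nil_iff_lt_length.mpr (by omega))
      (Walk.not_nil_iff_lt_length.mpr (by omega)) (by omega)⟩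

lemma IsTree.isTEDS_image_nonLeafNeighborSet (hT : G.IsTree) {c : V}
    (hc : ∀ v, G.dist c v ≤ 2) (hS : (G.nonLeafNeighborSet c).Nontrivial) :
    IsTEDS G ((fun u => s(c, u)) '' G.nonLeafNeighborSet c) := by
  refine ⟨?_, ?_⟩
  · rintro _ ⟨u, hu, rfl⟩
    exact hu.1
  suffices h : ∀ p q, G.Adj p q → G.dist c q = G.dist c p + 1 →
      ∃ f ∈ (fun u => s(c, u)) '' G.nonLeafNeighborSet c, eAdj s(p, q) f by
    intro e he
    induction e using Sym2.ind with
    | _ p q =>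
      rcases hT.dist_eq_dist_add_one_of_adj c he with hd | hd
      · rw [Sym2.eq_swap]
        exact h q p he.symm hd
      · exact h p q he hd
  intro p q hpq hd
  have hq := hc q
  obtain rfl | hp : p = c ∨ G.dist c p = 1 := by
    refine (eq_or_ne p c).imp_right fun hpc => ?_
    have := hT.connected.pos_dist_of_ne hpc.symm
    omega
  · obtain ⟨u, hu, huq⟩ := hS.exists_ne q
    exact ⟨s(p, u), ⟨u, hu, rfl⟩, fun h => huq (Sym2.congr_right.mp h).symm,
      p, Sym2.mem_mk_left _ _, Sym2.mem_mk_left _ _⟩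
  · have hqc : q ≠ c := by
      rintro rfl
      simp at hd
    refine ⟨s(c, p), ⟨p, ⟨dist_eq_one_iff_adj.mp hp, q, hqc, hpq⟩, rfl⟩, ?_,
      p, Sym2.mem_mk_left _ _, Sym2.mem_mk_right _ _⟩
    rw [Sym2.eq_swap (a := c), Ne, Sym2.congr_right]
    exact hqc

lemma IsTree.ncard_nonLeafNeighborSet_le (hT : G.IsTree) {c : V} (hc : ∀ v, G.dist c v ≤ 2)
    {F : Set (Sym2 V)} (hF : IsEDS G F) (hfin : F.Finite) :
    (G.nonLeafNeighborSet c).ncard ≤ F.ncard := by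
  refine IsIndepSet.ncard_le_ncard_of_forall_exists_mem ?_ hF.1 hfin ?_
  · intro u hu u' hu' _ hadj
    exact hT.dist_ne_of_adj c hadj
      (by rw [dist_eq_one_iff_adj.mpr hu.1, dist_eq_one_iff_adj.mpr hu'.1])
  · rintro u ⟨hcu, ℓ, hℓc, huℓ⟩
    have hℓ : G.dist c ℓ = 2 := by
      have := hT.connected.pos_dist_of_ne hℓc.symm
      have := hT.dist_eq_dist_add_one_of_adj c huℓ
      rw [dist_eq_one_iff_adj.mpr hcu] at this
      omega
    exact hF.exists_mem_of_forall_adj_eq huℓ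
      fun z hz => hT.eq_of_adj_of_forall_dist_le (fun v => hℓ ▸ hc v) huℓ.symm hz

end SimpleGraph

theorem stmt8 {V : Type*} [Fintype V] (T : SimpleGraph V)
    (hT : T.IsTree) (hdiam : T.diam = 4) :
    tedsNum T = edsNum T := by
  obtain ⟨c, hc, hS⟩ := hT.exists_forall_dist_le_two_of_diam_eq_four hdiam
  refine tedsNum_eq_edsNum_of_forall_isEDS (hT.isTEDS_image_nonLeafNeighborSet hc hS)
    fun F hF => ?_
  rw [Set.ncard_image_of_injective _ fun u u' h => Sym2.congr_right.mp h]
  exact hT.ncard_nonLeafNeighborSet_le hc hF (Set.toFinite F)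
end

section
/- Let T be a tree of diameter exactly 5. Then γ'_t(T) = γ'(T) or γ'_t(T) = γ'(T) + 1. -/
open SimpleGraph

variable {V : Type*}

/-!
Let `x₀x₁x₂x₃x₄x₅` be a diametral path and `uv = x₂x₃` its central edge. In a tree, distances
from a fixed vertex increase along any walk that never backtracks; hence diameter 5 forces every
vertex to lie within distance 2 of `u` or `v`, and every vertex two steps away from the central
edge to be a leaf. Let `S` be the set of neighbours of `u` and `v`, off the central edge, that
carry such leaves (it contains `x₁` and `x₄`). The pendant edges at `S` force `γ' ≥ |S|`, since
`S` is independent. Conversely, the edges joining `S` to `u` and `v` dominate every edge, and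
adding `uv`, which is adjacent to all of them, makes the set total. So
`γ' ≤ γ'_t ≤ |S| + 1 ≤ γ' + 1`.
-/

namespace SimpleGraph

section Domination

variable {G : SimpleGraph V} {F : Set (Sym2 V)} {e : Sym2 V}

lemma IsTEDS.isEDS (hF : IsTEDS G F) : IsEDS G F :=
  ⟨hF.1, fun e he _ => hF.2 e he⟩

lemma tedsNum_le_ncard (hF : IsTEDS G F) : tedsNum G ≤ F.ncard :=
  Nat.sInf_le ⟨F, hF, rfl⟩

lemma edsNum_le_tedsNum (hF : IsTEDS G F) : edsNum G ≤ tedsNum G := by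
  have hmem : tedsNum G ∈ {n | ∃ F, IsTEDS G F ∧ F.ncard = n} :=
    Nat.sInf_mem ⟨F.ncard, F, hF, rfl⟩
  obtain ⟨F', hF', hcard⟩ := hmem
  exact Nat.sInf_le ⟨F', hF'.isEDS, hcard⟩

lemma le_edsNum {n : ℕ} (hF : IsEDS G F) (h : ∀ F, IsEDS G F → n ≤ F.ncard) :
    n ≤ edsNum G :=
  le_csInf ⟨_, F, hF, rfl⟩ (by rintro _ ⟨F', hF', rfl⟩; exact h F' hF')

lemma IsEDS.isTEDS_insert (hF : IsEDS G F) (he : e ∈ G.edgeSet)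
    (hadj : ∀ f ∈ F, eAdj f e) : IsTEDS G (insert e F) := by
  refine ⟨Set.insert_subset he hF.1, fun f hf => ?_⟩
  by_cases hfF : f ∈ F
  · exact ⟨e, Set.mem_insert e F, hadj f hfF⟩
  · obtain ⟨g, hg, hfg⟩ := hF.2 f hf hfF
    exact ⟨g, Set.mem_insert_of_mem e hg, hfg⟩

/-- The pendant edge `cw` must be dominated, and only through its end `c`. -/
lemma IsEDS.exists_mem_of_pendant (hF : IsEDS G F) {c w : V} (hcw : G.Adj c w)
    (hw : ∀ z, G.Adj w z → z = c) : ∃ f ∈ F, c ∈ f := by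
  by_cases hmem : s(c, w) ∈ F
  · exact ⟨_, hmem, Sym2.mem_mk_left c w⟩
  obtain ⟨f, hfF, hne, z, hz, hzf⟩ := hF.2 _ hcw hmem
  rcases Sym2.mem_iff.mp hz with rfl | rfl
  · exact ⟨f, hfF, hzf⟩
  obtain ⟨y, rfl⟩ := Sym2.mem_iff_exists.mp hzf
  obtain rfl := hw y (hF.1 hfF)
  exact absurd Sym2.eq_swap hne

/-- An edge dominating set has an edge at every vertex of `S`, and no edge meets two vertices
of `S`. -/
lemma ncard_le_ncard_of_isEDS [Finite V] {S : Set V} (hS : S.Pairwise fun a b => ¬ G.Adj a b)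
    (hpendant : ∀ c ∈ S, ∃ w, G.Adj c w ∧ ∀ z, G.Adj w z → z = c) (hF : IsEDS G F) :
    S.ncard ≤ F.ncard := by
  have hcover : ∀ c, ∃ f, c ∈ S → f ∈ F ∧ c ∈ f := by
    intro c
    by_cases hc : c ∈ S
    · obtain ⟨w, hcw, hw⟩ := hpendant c hc
      obtain ⟨f, hf, hcf⟩ := hF.exists_mem_of_pendant hcw hw
      exact ⟨f, fun _ => ⟨hf, hcf⟩⟩
    · exact ⟨s(c, c), fun h => absurd h hc⟩
  choose g hg using hcover
  refine Set.ncard_le_ncard_of_injOn g (fun c hc => (hg c hc).1) ?_ F.toFinite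
  intro c hc d hd hcd
  by_contra hne
  obtain ⟨hgF, hcg⟩ := hg c hc
  have hgc : g c = s(c, d) := (Sym2.mem_and_mem_iff hne).mp ⟨hcg, hcd ▸ (hg d hd).2⟩
  exact hS hc hd hne (G.mem_edgeSet.mp (hgc ▸ hF.1 hgF))

end Domination

namespace IsTree

variable {T : SimpleGraph V} (hT : T.IsTree) {s a b c : V}
include hT

lemma eq_of_dist_eq_add_one (hab : T.Adj a b) (hcb : T.Adj c b)
    (ha : T.dist s b = T.dist s a + 1) (hc : T.dist s b = T.dist s c + 1) : a = c := by
  obtain ⟨p, -, hp⟩ := hT.connected.exists_path_of_dist s a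
  obtain ⟨q, -, hq⟩ := hT.connected.exists_path_of_dist s c
  have hpb := (p.concat hab).isPath_of_length_eq_dist (by rw [Walk.length_concat, hp, ha])
  have hqb := (q.concat hcb).isPath_of_length_eq_dist (by rw [Walk.length_concat, hq, hc])
  have := congrArg Subtype.val (hT.isAcyclic.subsingleton_path s b |>.elim ⟨_, hpb⟩ ⟨_, hqb⟩)
  exact (Walk.concat_inj this).1

lemma dist_eq_add_one_of_adj_of_adj (hab : T.Adj a b) (hbc : T.Adj b c) (hac : a ≠ c)
    (h : T.dist s b = T.dist s a + 1) : T.dist s c = T.dist s b + 1 :=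
  (hT.dist_eq_dist_add_one_of_adj s hbc).resolve_left
    fun h' => hac (hT.eq_of_dist_eq_add_one hab hbc.symm h h')

lemma not_adj_of_adj_of_adj (hab : T.Adj a b) (hac : T.Adj a c) : ¬ T.Adj b c := fun hbc => by
  have h := hT.dist_eq_add_one_of_adj_of_adj (s := a) hab hbc hac.ne
    (by rw [dist_self, dist_eq_one_iff_adj.mpr hab])
  rw [dist_eq_one_iff_adj.mpr hab, dist_eq_one_iff_adj.mpr hac] at h
  omega

lemma not_adj_of_adj_of_adj_of_adj {u v : V} (huv : T.Adj u v) (hub : T.Adj u b)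
    (hvc : T.Adj v c) (hbv : b ≠ v) (hcu : c ≠ u) : ¬ T.Adj b c := fun hbc => by
  have h₁ := hT.dist_eq_add_one_of_adj_of_adj (s := u) hub hbc hcu.symm
    (by rw [dist_self, dist_eq_one_iff_adj.mpr hub])
  have h₂ := hT.dist_eq_add_one_of_adj_of_adj hbc hvc.symm hbv h₁
  rw [dist_eq_one_iff_adj.mpr hub] at h₁
  rw [dist_eq_one_iff_adj.mpr huv] at h₂
  omega

end IsTree

lemma exists_adj_adj_of_dist_eq_two {G : SimpleGraph V} {u v : V} (h : G.dist u v = 2) :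
    ∃ c, G.Adj u c ∧ G.Adj c v := by
  have hreach : G.Reachable u v := Reachable.of_dist_ne_zero (by omega)
  have hedist : G.edist u v = 2 := by rw [← hreach.coe_dist_eq_edist, h]; rfl
  obtain ⟨c, hc⟩ := (edist_eq_two_iff.mp hedist).2.2
  rw [mem_commonNeighbors] at hc
  exact ⟨c, hc.1, hc.2.symm⟩

/-- When `uv` is the central edge of a tree of diameter 5, these are the support vertices
adjacent to `u`, other than `v`. -/
def supportNbrs (T : SimpleGraph V) (u v : V) : Set V :=
  {a | T.Adj u a ∧ a ≠ v ∧ ∃ w, T.Adj a w ∧ w ≠ u}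

def supportEdges (T : SimpleGraph V) (u v : V) : Set (Sym2 V) :=
  (s(u, ·)) '' T.supportNbrs u v ∪ (s(v, ·)) '' T.supportNbrs v u

def IsOnSide (T : SimpleGraph V) (p q s t : V) : Prop :=
  s = p ∨ (T.Adj p s ∧ s ≠ q ∧ t ≠ p)

section CentralEdge

variable {T : SimpleGraph V} {u v : V}

lemma supportEdges_subset_edgeSet : T.supportEdges u v ⊆ T.edgeSet := by
  rintro _ (⟨a, ha, rfl⟩ | ⟨b, hb, rfl⟩)
  exacts [ha.1, hb.1]

lemma eAdj_of_mem_supportEdges {f : Sym2 V} (huv : T.Adj u v) (hf : f ∈ T.supportEdges u v) :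
    eAdj f s(u, v) := by
  rcases hf with ⟨a, ⟨hua, hav, -⟩, rfl⟩ | ⟨b, ⟨-, hbu, -⟩, rfl⟩
  · exact ⟨by simp [hav, huv.ne], u, Sym2.mem_mk_left _ _, Sym2.mem_mk_left _ _⟩
  · exact ⟨by simp [hbu, huv.ne'], v, Sym2.mem_mk_left _ _, Sym2.mem_mk_right _ _⟩

lemma IsOnSide.exists_eAdj {F : Set (Sym2 V)} {p q s t a : V} (hside : T.IsOnSide p q s t)
    (hst : T.Adj s t) (ha : a ∈ T.supportNbrs p q) (hF : ∀ x ∈ T.supportNbrs p q, s(p, x) ∈ F)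
    (he : s(s, t) ∉ F) : ∃ f ∈ F, eAdj s(s, t) f := by
  rcases hside with rfl | ⟨hps, hsq, htp⟩
  · have hta : t ≠ a := by rintro rfl; exact he (hF t ha)
    exact ⟨s(s, a), hF a ha, ⟨by simp [hta, ha.1.ne], s, Sym2.mem_mk_left _ _,
      Sym2.mem_mk_left _ _⟩⟩
  · exact ⟨s(p, s), hF s ⟨hps, hsq, t, hst, htp⟩, ⟨by simp [htp, hps.ne'], s,
      Sym2.mem_mk_left _ _, Sym2.mem_mk_right _ _⟩⟩

lemma isOnSide_or_isOnSide_of_adj {p q s t : V} (hps : T.Adj p s) (hsq : s ≠ q) :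
    T.IsOnSide p q s t ∨ T.IsOnSide p q t s := by
  by_cases htp : t = p
  · exact Or.inr (Or.inl htp)
  · exact Or.inl (Or.inr ⟨hps, hsq, htp⟩)

end CentralEdge

namespace IsTree

variable {T : SimpleGraph V} (hT : T.IsTree) {u v : V} (huv : T.Adj u v)
  (hnear : ∀ s, T.dist s u ≤ 2 ∨ T.dist s v ≤ 2)
include hT huv hnear

lemma eq_of_adj_of_forall_dist_le_two {c w z : V} (hc : T.Adj u c) (hcv : c ≠ v)
    (hcw : T.Adj c w) (hwu : w ≠ u) (hwz : T.Adj w z) : z = c := by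
  by_contra hzc
  have h₁ : T.dist z w = T.dist z z + 1 := by rw [dist_self, dist_eq_one_iff_adj.mpr hwz.symm]
  have h₂ := hT.dist_eq_add_one_of_adj_of_adj hwz.symm hcw.symm hzc h₁
  have h₃ := hT.dist_eq_add_one_of_adj_of_adj hcw.symm hc.symm hwu h₂
  have h₄ := hT.dist_eq_add_one_of_adj_of_adj hc.symm huv hcv h₃
  have := hnear z
  rw [dist_self] at h₁
  omega

lemma isOnSide_of_dist_le_two {s t : V} (hst : T.Adj s t) (hs : T.dist s u ≤ 2) :
    T.IsOnSide u v s t ∨ T.IsOnSide u v t s ∨ T.IsOnSide v u s t ∨ T.IsOnSide v u t s := by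
  interval_cases h : T.dist s u
  · exact Or.inl (Or.inl (hT.connected.dist_eq_zero_iff.mp h))
  · have hus := (dist_eq_one_iff_adj.mp h).symm
    by_cases hsv : s = v
    · exact Or.inr (Or.inr (Or.inl (Or.inl hsv)))
    · have := isOnSide_or_isOnSide_of_adj (t := t) hus hsv
      tauto
  · obtain ⟨c, hsc, hcu⟩ := exists_adj_adj_of_dist_eq_two h
    have hsu : s ≠ u := by rintro rfl; simp at h
    by_cases hcv : c = v
    · subst hcv
      have := isOnSide_or_isOnSide_of_adj (t := t) hsc.symm hsu
      tauto
    · obtain rfl := hT.eq_of_adj_of_forall_dist_le_two huv hnear hcu.symm hcv hsc.symm hsu hst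
      exact Or.inr (Or.inl (Or.inr ⟨hcu.symm, hcv, hsu⟩))

lemma isOnSide_cases {s t : V} (hst : T.Adj s t) :
    T.IsOnSide u v s t ∨ T.IsOnSide u v t s ∨ T.IsOnSide v u s t ∨ T.IsOnSide v u t s := by
  rcases hnear s with hs | hs
  · exact hT.isOnSide_of_dist_le_two huv hnear hst hs
  · have := hT.isOnSide_of_dist_le_two huv.symm (fun s => (hnear s).symm) hst hs
    tauto

lemma supportEdges_isEDS {a b : V} (ha : a ∈ T.supportNbrs u v) (hb : b ∈ T.supportNbrs v u) :
    IsEDS T (T.supportEdges u v) := by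
  refine ⟨supportEdges_subset_edgeSet, fun e he hne => ?_⟩
  induction e using Sym2.ind with
  | _ s t =>
    have hst : T.Adj s t := he
    have hA : ∀ x ∈ T.supportNbrs u v, s(u, x) ∈ T.supportEdges u v :=
      fun x hx => Or.inl ⟨x, hx, rfl⟩
    have hB : ∀ x ∈ T.supportNbrs v u, s(v, x) ∈ T.supportEdges u v :=
      fun x hx => Or.inr ⟨x, hx, rfl⟩
    rcases hT.isOnSide_cases huv hnear hst with h | h | h | h
    · exact h.exists_eAdj hst ha hA hne
    · rw [Sym2.eq_swap] at hne ⊢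
      exact h.exists_eAdj hst.symm ha hA hne
    · exact h.exists_eAdj hst hb hB hne
    · rw [Sym2.eq_swap] at hne ⊢
      exact h.exists_eAdj hst.symm hb hB hne

omit hnear in
lemma disjoint_supportNbrs : Disjoint (T.supportNbrs u v) (T.supportNbrs v u) :=
  Set.disjoint_left.mpr fun _ ha hb => hT.not_adj_of_adj_of_adj ha.1 huv hb.1.symm

omit hnear in
lemma pairwise_not_adj_supportNbrs :
    (T.supportNbrs u v ∪ T.supportNbrs v u).Pairwise fun a b => ¬ T.Adj a b := by
  rintro a (ha | ha) b (hb | hb) -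
  · exact hT.not_adj_of_adj_of_adj ha.1 hb.1
  · exact hT.not_adj_of_adj_of_adj_of_adj huv ha.1 hb.1 ha.2.1 hb.2.1
  · exact hT.not_adj_of_adj_of_adj_of_adj huv.symm ha.1 hb.1 ha.2.1 hb.2.1
  · exact hT.not_adj_of_adj_of_adj ha.1 hb.1

lemma exists_pendant_of_mem_supportNbrs {c : V} (hc : c ∈ T.supportNbrs u v) :
    ∃ w, T.Adj c w ∧ ∀ z, T.Adj w z → z = c := by
  obtain ⟨huc, hcv, w, hcw, hwu⟩ := hc
  exact ⟨w, hcw, fun z => hT.eq_of_adj_of_forall_dist_le_two huv hnear huc hcv hcw hwu⟩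

omit hnear in
lemma ncard_supportEdges_le [Finite V] :
    (T.supportEdges u v).ncard ≤ (T.supportNbrs u v ∪ T.supportNbrs v u).ncard := by
  rw [Set.ncard_union_eq (hT.disjoint_supportNbrs huv)]
  exact (Set.ncard_union_le _ _).trans (add_le_add (Set.ncard_image_le (Set.toFinite _))
    (Set.ncard_image_le (Set.toFinite _)))

theorem tedsNum_eq_edsNum_or_eq_add_one [Finite V] {a b : V} (ha : a ∈ T.supportNbrs u v)
    (hb : b ∈ T.supportNbrs v u) : tedsNum T = edsNum T ∨ tedsNum T = edsNum T + 1 := by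
  have hEDS := hT.supportEdges_isEDS huv hnear ha hb
  have hTEDS := hEDS.isTEDS_insert huv fun f hf => eAdj_of_mem_supportEdges huv hf
  have hpendant : ∀ c ∈ T.supportNbrs u v ∪ T.supportNbrs v u,
      ∃ w, T.Adj c w ∧ ∀ z, T.Adj w z → z = c := by
    rintro c (hc | hc)
    · exact hT.exists_pendant_of_mem_supportNbrs huv hnear hc
    · exact hT.exists_pendant_of_mem_supportNbrs huv.symm (fun s => (hnear s).symm) hc
  have hupper : tedsNum T ≤ edsNum T + 1 :=
    calc tedsNum T ≤ (insert s(u, v) (T.supportEdges u v)).ncard := tedsNum_le_ncard hTEDS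
      _ ≤ (T.supportEdges u v).ncard + 1 := Set.ncard_insert_le _ _
      _ ≤ (T.supportNbrs u v ∪ T.supportNbrs v u).ncard + 1 := by
        gcongr; exact hT.ncard_supportEdges_le huv
      _ ≤ edsNum T + 1 := by
        gcongr
        exact le_edsNum hEDS fun F hF =>
          ncard_le_ncard_of_isEDS (hT.pairwise_not_adj_supportNbrs huv) hpendant hF
  have := edsNum_le_tedsNum hTEDS
  omega

end IsTree

lemma exists_supportNbrs_of_dist_eq_five {G : SimpleGraph V} {x y : V} (h : G.dist x y = 5) :
    ∃ u v a b, G.Adj u v ∧ a ∈ G.supportNbrs u v ∧ b ∈ G.supportNbrs v u := by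
  have hreach : G.Reachable x y := Reachable.of_dist_ne_zero (by omega)
  obtain ⟨p, hp, hlen⟩ := hreach.exists_path_of_dist
  rw [h] at hlen
  have hadj : ∀ i < 5, G.Adj (p.getVert i) (p.getVert (i + 1)) :=
    fun i hi => p.adj_getVert_succ (hlen ▸ hi)
  have hne : ∀ i j, i ≤ 5 → j ≤ 5 → i ≠ j → p.getVert i ≠ p.getVert j :=
    fun i j hi hj hij heq => hij (hp.getVert_injOn (by simp [hlen, hi]) (by simp [hlen, hj]) heq)
  refine ⟨p.getVert 2, p.getVert 3, p.getVert 1, p.getVert 4, hadj 2 ?_,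
    ⟨(hadj 1 ?_).symm, hne 1 3 ?_ ?_ ?_, p.getVert 0, (hadj 0 ?_).symm, hne 0 2 ?_ ?_ ?_⟩,
    ⟨hadj 3 ?_, hne 4 2 ?_ ?_ ?_, p.getVert 5, hadj 4 ?_, hne 5 3 ?_ ?_ ?_⟩⟩ <;> omega

namespace IsTree

variable {T : SimpleGraph V} (hT : T.IsTree) {u v : V} (huv : T.Adj u v)
  (hdist : ∀ s t, T.dist s t ≤ 5)
include hT huv hdist

lemma dist_le_two_of_dist_eq_add_one {s b : V} (hb : b ∈ T.supportNbrs v u)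
    (h : T.dist s v = T.dist s u + 1) : T.dist s u ≤ 2 := by
  obtain ⟨hvb, hbu, w, hbw, hwv⟩ := hb
  have h₁ := hT.dist_eq_add_one_of_adj_of_adj huv hvb hbu.symm h
  have h₂ := hT.dist_eq_add_one_of_adj_of_adj hvb hbw hwv.symm h₁
  have := hdist s w
  omega

lemma forall_dist_le_two {a b : V} (ha : a ∈ T.supportNbrs u v) (hb : b ∈ T.supportNbrs v u)
    (s : V) : T.dist s u ≤ 2 ∨ T.dist s v ≤ 2 := by
  rcases hT.dist_eq_dist_add_one_of_adj s huv with h | h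
  · exact Or.inr (hT.dist_le_two_of_dist_eq_add_one huv.symm hdist ha h)
  · exact Or.inl (hT.dist_le_two_of_dist_eq_add_one huv hdist hb h)

end IsTree

end SimpleGraph

theorem stmt9 {V : Type*} [Fintype V] (T : SimpleGraph V)
    (hT : T.IsTree) (hdiam : T.diam = 5) :
    tedsNum T = edsNum T ∨ tedsNum T = edsNum T + 1 := by
  have : Nonempty V := hT.connected.nonempty
  have hdist : ∀ s t, T.dist s t ≤ 5 :=
    fun _ _ => hdiam ▸ dist_le_diam (ediam_ne_top_of_diam_ne_zero (by omega))
  obtain ⟨x, y, hxy⟩ := T.exists_dist_eq_diam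
  obtain ⟨u, v, a, b, huv, ha, hb⟩ := exists_supportNbrs_of_dist_eq_five (hxy.trans hdiam)
  exact hT.tedsNum_eq_edsNum_or_eq_add_one huv (hT.forall_dist_le_two huv hdist ha hb) ha hb
end

section
/- Let T be a tree with an edge e, and suppose the sets F₁(T,e) (TED-sets containing e), F₀(T,e) (TED-sets not containing e), F_{1̄}(T,e) (edge dominating sets in which e is the unique edge with no neighbor in the set), and F_{0̄}(T,e) (total edge dominating sets of T − e not dominating e) are all nonempty. Then γ'₁(T,e) ≤ γ'₀(T,e) + 1, γ'₁(T,e) ≤ γ'_{1̄}(T,e) + 1, γ'₁(T,e) ≤ γ'_{0̄}(T,e) + 2, and γ'_{1̄}(T,e) ≤ γ'_{0̄}(T,e) + 1, where each γ' is the minimum cardinality over the corresponding family. -/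
open SimpleGraph

variable {V : Type*}

/-- γ'₁: minimum size of a TED-set containing `e` (∞ if none exists). -/
noncomputable def g1 (G : SimpleGraph V) (e : Sym2 V) : ℕ∞ :=
  sInf {n : ℕ∞ | ∃ F : Set (Sym2 V), IsTEDS G F ∧ e ∈ F ∧ F.Finite ∧ (F.ncard : ℕ∞) = n}

/-- γ'₀: minimum size of a TED-set not containing `e` (∞ if none exists). -/
noncomputable def g0 (G : SimpleGraph V) (e : Sym2 V) : ℕ∞ :=
  sInf {n : ℕ∞ | ∃ F : Set (Sym2 V), IsTEDS G F ∧ e ∉ F ∧ F.Finite ∧ (F.ncard : ℕ∞) = n}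

/-- γ'_{1̄}: minimum size of an edge dominating set `F` with `e ∈ F` such that `e` is the
unique isolated edge of `F` (∞ if none exists). -/
noncomputable def g1bar (G : SimpleGraph V) (e : Sym2 V) : ℕ∞ :=
  sInf {n : ℕ∞ | ∃ F : Set (Sym2 V), IsEDS G F ∧ e ∈ F ∧
    (∀ f ∈ F, ¬ eAdj e f) ∧ (∀ f ∈ F, f ≠ e → ∃ f' ∈ F, eAdj f f') ∧
    F.Finite ∧ (F.ncard : ℕ∞) = n}

/-- γ'_{0̄}: minimum size of a TED-set of `G − e` no edge of which is adjacent to `e`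
(∞ if none exists). -/
noncomputable def g0bar (G : SimpleGraph V) (e : Sym2 V) : ℕ∞ :=
  sInf {n : ℕ∞ | ∃ F : Set (Sym2 V), IsTEDS (G.deleteEdges {e}) F ∧
    (∀ f ∈ F, ¬ eAdj e f) ∧ F.Finite ∧ (F.ncard : ℕ∞) = n}

/-!
Each inequality comes from enlarging a member of one family by a single edge into a member of
another: add `e` to a TED-set avoiding `e`; add an edge adjacent to `e` to an edge dominating set
whose only isolated edge is `e`; add `e` to a TED-set of `T − e` that does not dominate `e`.
The bound `γ'₁ ≤ γ'_{0̄} + 2` is the composite of the last two.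
-/

section MinCard

variable {α : Type*}

noncomputable def minCard (P : Set α → Prop) : ℕ∞ :=
  sInf {n | ∃ F, P F ∧ F.Finite ∧ (F.ncard : ℕ∞) = n}

lemma minCard_le {P : Set α → Prop} {F : Set α} (hF : P F) (hfin : F.Finite) :
    minCard P ≤ F.ncard :=
  sInf_le ⟨F, hF, hfin, rfl⟩

lemma minCard_le_minCard_add {P Q : Set α → Prop} (k : ℕ)
    (h : ∀ F, Q F → F.Finite → ∃ F', P F' ∧ F'.Finite ∧ F'.ncard ≤ F.ncard + k) :
    minCard P ≤ minCard Q + k := by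
  rcases Set.eq_empty_or_nonempty {n : ℕ∞ | ∃ F, Q F ∧ F.Finite ∧ (F.ncard : ℕ∞) = n}
    with hQ | hQ
  · simp [minCard, hQ]
  obtain ⟨F, hF, hfin, hcard⟩ := csInf_mem hQ
  obtain ⟨F', hF', hfin', hcard'⟩ := h F hF hfin
  calc minCard P ≤ F'.ncard := minCard_le hF' hfin'
    _ ≤ F.ncard + k := by exact_mod_cast hcard'
    _ = minCard Q + k := by rw [hcard]; rfl

end MinCard

variable {G : SimpleGraph V} {F F' : Set (Sym2 V)} {e f : Sym2 V}

lemma g1_eq_minCard : g1 G e = minCard fun F => IsTEDS G F ∧ e ∈ F := by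
  simp only [g1, minCard, and_assoc]

lemma g0_eq_minCard : g0 G e = minCard fun F => IsTEDS G F ∧ e ∉ F := by
  simp only [g0, minCard, and_assoc]

lemma g1bar_eq_minCard : g1bar G e = minCard fun F => IsEDS G F ∧ e ∈ F ∧
    (∀ f ∈ F, ¬ eAdj e f) ∧ (∀ f ∈ F, f ≠ e → ∃ f' ∈ F, eAdj f f') := by
  simp only [g1bar, minCard, and_assoc]

lemma g0bar_eq_minCard : g0bar G e = minCard fun F =>
    IsTEDS (G.deleteEdges {e}) F ∧ ∀ f ∈ F, ¬ eAdj e f := by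
  simp only [g0bar, minCard, and_assoc]

lemma IsTEDS.mono (hF : IsTEDS G F) (hFF' : F ⊆ F') (hF' : F' ⊆ G.edgeSet) : IsTEDS G F' :=
  ⟨hF', fun g hg => (hF.2 g hg).imp fun _ h => ⟨hFF' h.1, h.2⟩⟩

lemma IsEDS.isTEDS_insert (hF : IsEDS G F)
    (hFe : ∀ g ∈ F, g ≠ e → ∃ g' ∈ F, eAdj g g') (hf : f ∈ G.edgeSet) (hef : eAdj e f) :
    IsTEDS G (insert f F) := by
  refine ⟨Set.insert_subset hf hF.1, fun g hg => ?_⟩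
  by_cases hge : g = e
  · exact ⟨f, Set.mem_insert _ _, hge ▸ hef⟩
  obtain ⟨g', hg', hgg'⟩ : ∃ g' ∈ F, eAdj g g' := by
    by_cases hgF : g ∈ F
    · exact hFe g hgF hge
    · exact hF.2 g hg hgF
  exact ⟨g', Set.mem_insert_of_mem _ hg', hgg'⟩

lemma IsTEDS.isEDS_insert_of_deleteEdges (hF : IsTEDS (G.deleteEdges {e}) F)
    (he : e ∈ G.edgeSet) : IsEDS G (insert e F) := by
  refine ⟨Set.insert_subset he (hF.1.trans (edgeSet_mono (deleteEdges_le _))),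
    fun g hg hgF => ?_⟩
  have hg' : g ∈ (G.deleteEdges {e}).edgeSet := by
    rw [edgeSet_deleteEdges]
    exact ⟨hg, fun hge => hgF (hge ▸ Set.mem_insert _ _)⟩
  obtain ⟨g', hg'F, hgg'⟩ := hF.2 g hg'
  exact ⟨g', Set.mem_insert_of_mem _ hg'F, hgg'⟩

lemma g1_le_g0_add_one (he : e ∈ G.edgeSet) : g1 G e ≤ g0 G e + 1 := by
  rw [g1_eq_minCard, g0_eq_minCard]
  refine minCard_le_minCard_add 1 fun F ⟨hF, _⟩ hfin => ⟨insert e F, ⟨?_, Set.mem_insert _ _⟩,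
    hfin.insert e, Set.ncard_insert_le e F⟩
  exact hF.mono (Set.subset_insert _ _) (Set.insert_subset he hF.1)

lemma g1_le_g1bar_add_one (hf : f ∈ G.edgeSet) (hef : eAdj e f) :
    g1 G e ≤ g1bar G e + 1 := by
  rw [g1_eq_minCard, g1bar_eq_minCard]
  exact minCard_le_minCard_add 1 fun F ⟨hF, heF, _, hFe⟩ hfin =>
    ⟨insert f F, ⟨hF.isTEDS_insert hFe hf hef, Set.mem_insert_of_mem _ heF⟩,
      hfin.insert f, Set.ncard_insert_le f F⟩

lemma g1bar_le_g0bar_add_one (he : e ∈ G.edgeSet) : g1bar G e ≤ g0bar G e + 1 := by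
  rw [g1bar_eq_minCard, g0bar_eq_minCard]
  refine minCard_le_minCard_add 1 fun F ⟨hF, hFe⟩ hfin => ⟨insert e F,
    ⟨hF.isEDS_insert_of_deleteEdges he, Set.mem_insert _ _, ?_, ?_⟩,
    hfin.insert e, Set.ncard_insert_le e F⟩
  · rintro g (rfl | hg)
    · exact fun h => h.1 rfl
    · exact hFe g hg
  · rintro g (rfl | hg) hge
    · exact absurd rfl hge
    · obtain ⟨g', hg'F, hgg'⟩ := hF.2 g (hF.1 hg)
      exact ⟨g', Set.mem_insert_of_mem _ hg'F, hgg'⟩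

theorem stmt14_general {V : Type*} (T : SimpleGraph V)
    (e : Sym2 V) (he : e ∈ T.edgeSet)
    (h1 : ∃ F : Set (Sym2 V), IsTEDS T F ∧ e ∈ F) :
    g1 T e ≤ g0 T e + 1 ∧ g1 T e ≤ g1bar T e + 1 ∧
    g1 T e ≤ g0bar T e + 2 ∧ g1bar T e ≤ g0bar T e + 1 := by
  obtain ⟨F, hF, -⟩ := h1
  obtain ⟨f, hfF, hef⟩ := hF.2 e he
  have h1_le_1bar := g1_le_g1bar_add_one (hF.1 hfF) hef
  have h1bar_le_0bar := g1bar_le_g0bar_add_one he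
  refine ⟨g1_le_g0_add_one he, h1_le_1bar, ?_, h1bar_le_0bar⟩
  calc g1 T e ≤ g1bar T e + 1 := h1_le_1bar
    _ ≤ g0bar T e + 1 + 1 := by gcongr
    _ = g0bar T e + 2 := by rw [add_assoc]; rfl

theorem stmt14 {V : Type*} [Fintype V] (T : SimpleGraph V) (hT : T.IsTree)
    (e : Sym2 V) (he : e ∈ T.edgeSet)
    (h1 : ∃ F : Set (Sym2 V), IsTEDS T F ∧ e ∈ F)
    (h0 : ∃ F : Set (Sym2 V), IsTEDS T F ∧ e ∉ F)
    (h1b : ∃ F : Set (Sym2 V), IsEDS T F ∧ e ∈ F ∧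
      (∀ f ∈ F, ¬ eAdj e f) ∧ (∀ f ∈ F, f ≠ e → ∃ f' ∈ F, eAdj f f'))
    (h0b : ∃ F : Set (Sym2 V), IsTEDS (T.deleteEdges {e}) F ∧ ∀ f ∈ F, ¬ eAdj e f) :
    g1 T e ≤ g0 T e + 1 ∧ g1 T e ≤ g1bar T e + 1 ∧
    g1 T e ≤ g0bar T e + 2 ∧ g1bar T e ≤ g0bar T e + 1 :=
  stmt14_general T e he h1
end

section
/- Let T be a rooted tree, e⁰ a non-leaf edge with children neighbor edges e¹,…,e^q, and T⁰,…,T^q the corresponding subtrees (T^j is the component of T after removing all of e⁰,e¹,…,e^q except e^j that contains e^j). Then γ'_{0̄}(T, e⁰) = γ'_{0̄}(T⁰, e⁰) + Σ_{j=1}^q γ'₀(T^j, e^j). -/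
open SimpleGraph

variable {V : Type*}

/-- The connected component of `H` containing the vertex `v`, as a graph on the same
vertex type (all edges of `H` both of whose endpoints are reachable from `v`). -/
def compG (H : SimpleGraph V) (v : V) : SimpleGraph V where
  Adj a b := H.Adj a b ∧ H.Reachable v a
  symm := ⟨fun a b h => ⟨h.1.symm, h.2.trans h.1.reachable⟩⟩
  loopless := ⟨fun a h => H.loopless.irrefl a h.1⟩

/-!
A TED-set `F` of `T - e⁰` with no edge adjacent to `e⁰` avoids `u` and `p`, so each of its edges
lies in a single component of `T - u`, i.e. in one of the branches `T⁰ - e⁰`, `T¹, …, T^q`.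
Because `T` is a tree these components are pairwise vertex-disjoint, so an edge of one branch can
only be dominated by edges of `F` in the same branch. Hence `F` splits into TED-sets of the
branches (those of `T^j` avoiding `e^j`) with sizes adding up, and conversely such TED-sets glue
to one of `T - e⁰`; the minima are therefore additive.
-/

lemma ENat.sInf_mem_of_ne_top {s : Set ℕ∞} (h : sInf s ≠ ⊤) : sInf s ∈ s :=
  csInf_mem (Set.nonempty_iff_ne_empty.2 fun hs => h (hs ▸ sInf_empty))

section TEDNumber

noncomputable def tedNumWithin (G : SimpleGraph V) (A : Set (Sym2 V)) : ℕ∞ :=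
  sInf {n : ℕ∞ | ∃ F : Set (Sym2 V), IsTEDS G F ∧ F ⊆ A ∧ F.Finite ∧ (F.ncard : ℕ∞) = n}

variable {G : SimpleGraph V} {A : Set (Sym2 V)}

lemma g0bar_eq_tedNumWithin (G : SimpleGraph V) (e : Sym2 V) :
    g0bar G e = tedNumWithin (G.deleteEdges {e}) {f | ¬ eAdj e f} := rfl

lemma g0_eq_tedNumWithin (G : SimpleGraph V) (e : Sym2 V) : g0 G e = tedNumWithin G {e}ᶜ := by
  simp only [g0, tedNumWithin, Set.subset_compl_singleton_iff]

lemma tedNumWithin_congr {A' : Set (Sym2 V)} (h : ∀ f ∈ G.edgeSet, f ∈ A ↔ f ∈ A') :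
    tedNumWithin G A = tedNumWithin G A' := by
  have hsub : ∀ F, IsTEDS G F → (F ⊆ A ↔ F ⊆ A') := fun F hF =>
    ⟨fun hA f hf => (h f (hF.1 hf)).1 (hA hf), fun hA' f hf => (h f (hF.1 hf)).2 (hA' hf)⟩
  unfold tedNumWithin
  congr 1
  ext n
  exact exists_congr fun F => and_congr_right fun hF => and_congr_left' (hsub F hF)

lemma tedNumWithin_le {F : Set (Sym2 V)} (hF : IsTEDS G F) (hFA : F ⊆ A) (hfin : F.Finite) :
    tedNumWithin G A ≤ F.ncard :=
  sInf_le ⟨F, hF, hFA, hfin, rfl⟩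

lemma exists_isTEDS_ncard_eq_tedNumWithin (h : tedNumWithin G A ≠ ⊤) :
    ∃ F, IsTEDS G F ∧ F ⊆ A ∧ F.Finite ∧ (F.ncard : ℕ∞) = tedNumWithin G A :=
  ENat.sInf_mem_of_ne_top h

variable {ι : Type*} {G' : ι → SimpleGraph V}

lemma IsTEDS.iUnion (hcover : G.edgeSet = ⋃ i, (G' i).edgeSet) {F : ι → Set (Sym2 V)}
    (hF : ∀ i, IsTEDS (G' i) (F i)) : IsTEDS G (⋃ i, F i) := by
  refine ⟨Set.iUnion_subset fun i f hf => hcover ▸ Set.mem_iUnion_of_mem i ((hF i).1 hf),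
    fun g hg => ?_⟩
  obtain ⟨i, hi⟩ := Set.mem_iUnion.1 (hcover ▸ hg)
  obtain ⟨f, hf, hgf⟩ := (hF i).2 g hi
  exact ⟨f, Set.mem_iUnion_of_mem i hf, hgf⟩

lemma IsTEDS.inter_edgeSet (hcover : G.edgeSet = ⋃ i, (G' i).edgeSet)
    (hsep : ∀ i k, ∀ g ∈ (G' i).edgeSet, ∀ f ∈ (G' k).edgeSet, f ∈ A → ∀ v ∈ g, v ∈ f → i = k)
    {F : Set (Sym2 V)} (hF : IsTEDS G F) (hFA : F ⊆ A) (i : ι) :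
    IsTEDS (G' i) (F ∩ (G' i).edgeSet) := by
  refine ⟨Set.inter_subset_right, fun g hg => ?_⟩
  obtain ⟨f, hf, hgf⟩ := hF.2 g (hcover ▸ Set.mem_iUnion_of_mem i hg)
  obtain ⟨k, hk⟩ := Set.mem_iUnion.1 (hcover ▸ hF.1 hf)
  obtain ⟨v, hvg, hvf⟩ := hgf.2
  obtain rfl := hsep i k g hg f hk (hFA hf) v hvg hvf
  exact ⟨f, ⟨hf, hk⟩, hgf⟩

lemma ncard_iUnion_eq_sum [Fintype ι]
    (hsep : ∀ i k, ∀ g ∈ (G' i).edgeSet, ∀ f ∈ (G' k).edgeSet, f ∈ A → ∀ v ∈ g, v ∈ f → i = k)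
    {F : ι → Set (Sym2 V)} (hFG : ∀ i, F i ⊆ (G' i).edgeSet) (hFA : ∀ i, F i ⊆ A)
    (hfin : ∀ i, (F i).Finite) : (⋃ i, F i).ncard = ∑ i, (F i).ncard := by
  refine (Set.ncard_iUnion_of_finite hfin fun i k hik => ?_).trans (finsum_eq_sum_of_fintype _)
  refine Set.disjoint_left.2 fun f hfi hfk => hik ?_
  exact hsep i k f (hFG i hfi) f (hFG k hfk) (hFA k hfk) _ f.out_fst_mem f.out_fst_mem

theorem tedNumWithin_eq_sum [Fintype ι] (hcover : G.edgeSet = ⋃ i, (G' i).edgeSet)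
    (hsep : ∀ i k, ∀ g ∈ (G' i).edgeSet, ∀ f ∈ (G' k).edgeSet, f ∈ A → ∀ v ∈ g, v ∈ f → i = k) :
    tedNumWithin G A = ∑ i, tedNumWithin (G' i) A := by
  apply le_antisymm
  · by_cases htop : ∃ i, tedNumWithin (G' i) A = ⊤
    · obtain ⟨i, hi⟩ := htop
      rw [ENat.sum_eq_top.2 ⟨i, Finset.mem_univ i, hi⟩]
      exact le_top
    push Not at htop
    choose F hF hFA hfin hcard using fun i => exists_isTEDS_ncard_eq_tedNumWithin (htop i)
    calc tedNumWithin G A ≤ (⋃ i, F i).ncard :=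
          tedNumWithin_le (IsTEDS.iUnion hcover hF) (Set.iUnion_subset hFA) (Set.finite_iUnion hfin)
      _ = ∑ i, tedNumWithin (G' i) A := by
          rw [ncard_iUnion_eq_sum hsep (fun i => (hF i).1) hFA hfin, Nat.cast_sum]
          exact Finset.sum_congr rfl fun i _ => hcard i
  · refine le_sInf ?_
    rintro _ ⟨F, hF, hFA, hfin, rfl⟩
    have hsplit : F = ⋃ i, F ∩ (G' i).edgeSet := by
      rw [← Set.inter_iUnion, ← hcover, Set.inter_eq_left.2 hF.1]
    calc ∑ i, tedNumWithin (G' i) A ≤ ∑ i, ((F ∩ (G' i).edgeSet).ncard : ℕ∞) :=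
          Finset.sum_le_sum fun i _ => tedNumWithin_le (hF.inter_edgeSet hcover hsep hFA i)
            (Set.inter_subset_left.trans hFA) (hfin.inter_of_left _)
      _ = F.ncard := by
          rw [← Nat.cast_sum, ← ncard_iUnion_eq_sum hsep (fun _ => Set.inter_subset_right)
            (fun _ => Set.inter_subset_left.trans hFA) (fun _ => hfin.inter_of_left _), ← hsplit]

end TEDNumber

lemma compG_eq_of_reachable {H : SimpleGraph V} {v w : V} (h : H.Reachable v w) :
    compG H v = compG H w := by
  ext a b
  exact and_congr_right fun _ => ⟨h.symm.trans, h.trans⟩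

lemma mem_edgeSet_compG {H : SimpleGraph V} {v : V} {e : Sym2 V} :
    e ∈ (compG H v).edgeSet ↔ e ∈ H.edgeSet ∧ ∀ a ∈ e, H.Reachable v a := by
  induction e using Sym2.ind with
  | _ a b =>
    simp only [mem_edgeSet, Sym2.mem_iff, forall_eq_or_imp, forall_eq]
    exact ⟨fun ⟨hab, ha⟩ => ⟨hab, ha, ha.trans hab.reachable⟩, fun ⟨hab, ha, _⟩ => ⟨hab, ha⟩⟩

section Star

variable {T : SimpleGraph V} {u : V}

lemma notMem_of_mem_edgeSet_deleteIncidenceSet {e : Sym2 V}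
    (he : e ∈ (T.deleteIncidenceSet u).edgeSet) : u ∉ e := by
  rw [edgeSet_deleteIncidenceSet] at he
  exact fun hu => he.2 ⟨he.1, hu⟩

lemma exists_adj_reachable_deleteIncidenceSet (hT : T.Connected) {v : V} (hv : v ≠ u) :
    ∃ x, T.Adj u x ∧ (T.deleteIncidenceSet u).Reachable x v := by
  obtain ⟨w⟩ := hT.preconnected v u
  induction w with
  | nil => exact absurd rfl hv
  | @cons v y z hvy w ih =>
    by_cases hy : y = z
    · subst hy
      exact ⟨v, hvy.symm, .rfl⟩
    · obtain ⟨x, hux, hxy⟩ := ih hy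
      exact ⟨x, hux, hxy.trans (deleteIncidenceSet_adj.2 ⟨hvy.symm, hy, hv⟩).reachable⟩

lemma eq_of_reachable_deleteIncidenceSet (hT : T.IsAcyclic) {x y v : V} (hx : T.Adj u x)
    (hy : T.Adj u y) (hxv : (T.deleteIncidenceSet u).Reachable x v)
    (hyv : (T.deleteIncidenceSet u).Reachable y v) : x = y := by
  by_contra hxy
  refine isBridge_iff.1 (isAcyclic_iff_forall_adj_isBridge.1 hT hx) ?_
  have hle : T.deleteIncidenceSet u ≤ T.deleteEdges {s(u, x)} :=
    deleteEdges_anti (Set.singleton_subset_iff.2 ⟨hx, Sym2.mem_mk_left u x⟩)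
  have huy : (T.deleteEdges {s(u, x)}).Adj u y :=
    deleteEdges_adj.2 ⟨hy, by rw [Set.mem_singleton_iff, Sym2.congr_right]; exact Ne.symm hxy⟩
  exact huy.reachable.trans ((hxv.trans hyv.symm).mono hle).symm

/-- The edge set of the paper's `T^j` for `x = c j`, and of `T⁰` for `x = p`. -/
def branchEdgeSet (T : SimpleGraph V) (u x : V) : Set (Sym2 V) :=
  insert s(u, x) (compG (T.deleteIncidenceSet u) x).edgeSet

lemma edgeSet_eq_iUnion_branchEdgeSet (hT : T.Connected) :
    T.edgeSet = ⋃ x ∈ T.neighborSet u, branchEdgeSet T u x := by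
  ext e
  simp only [Set.mem_iUnion, mem_neighborSet, exists_prop]
  constructor
  · intro he
    by_cases hu : u ∈ e
    · obtain ⟨y, rfl⟩ := Sym2.mem_iff_exists.1 hu
      exact ⟨y, he, Set.mem_insert _ _⟩
    induction e using Sym2.ind with
    | _ a b =>
      simp only [Sym2.mem_iff, not_or] at hu
      have hab : (T.deleteIncidenceSet u).Adj a b :=
        deleteIncidenceSet_adj.2 ⟨he, Ne.symm hu.1, Ne.symm hu.2⟩
      obtain ⟨x, hux, hxa⟩ := exists_adj_reachable_deleteIncidenceSet hT (Ne.symm hu.1)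
      refine ⟨x, hux, Or.inr (mem_edgeSet_compG.2 ⟨hab, ?_⟩)⟩
      simp only [Sym2.mem_iff, forall_eq_or_imp, forall_eq]
      exact ⟨hxa, hxa.trans hab.reachable⟩
  · rintro ⟨x, hux, rfl | he⟩
    · exact hux
    · exact edgeSet_mono (deleteIncidenceSet_le T u) (mem_edgeSet_compG.1 he).1

lemma reachable_of_mem_branchEdgeSet {x v : V} {e : Sym2 V} (he : e ∈ branchEdgeSet T u x)
    (hv : v ∈ e) (hvu : v ≠ u) : (T.deleteIncidenceSet u).Reachable x v := by
  rcases he with rfl | he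
  · rcases Sym2.mem_iff.1 hv with rfl | rfl
    exacts [absurd rfl hvu, .rfl]
  · exact (mem_edgeSet_compG.1 he).2 v hv

lemma s_notMem_branchEdgeSet {x y : V} (hxy : y ≠ x) : s(u, y) ∉ branchEdgeSet T u x := by
  rintro (h | h)
  · exact hxy (Sym2.congr_right.1 h)
  · exact notMem_of_mem_edgeSet_deleteIncidenceSet (mem_edgeSet_compG.1 h).1 (Sym2.mem_mk_left u y)

lemma eq_of_mem_branchEdgeSet (hT : T.IsAcyclic) {x y v : V} {f g : Sym2 V} (hx : T.Adj u x)
    (hy : T.Adj u y) (hg : g ∈ branchEdgeSet T u x) (hf : f ∈ branchEdgeSet T u y) (hu : u ∉ f)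
    (hvg : v ∈ g) (hvf : v ∈ f) : x = y := by
  have hvu : v ≠ u := fun h => hu (h ▸ hvf)
  exact eq_of_reachable_deleteIncidenceSet hT hx hy (reachable_of_mem_branchEdgeSet hg hvg hvu)
    (reachable_of_mem_branchEdgeSet hf hvf hvu)

lemma g0_eq_tedNumWithin_of_edgeSet_eq_branchEdgeSet (hT : T.IsAcyclic) {x y : V}
    (hx : T.Adj u x) (hy : T.Adj u y) (hxy : x ≠ y) {G : SimpleGraph V}
    (hG : G.edgeSet = branchEdgeSet T u x) :
    g0 G s(u, x) = tedNumWithin G {f | ¬ eAdj s(y, u) f} := by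
  rw [g0_eq_tedNumWithin]
  refine tedNumWithin_congr fun f hf => ?_
  rw [hG] at hf
  simp only [Set.mem_compl_iff, Set.mem_singleton_iff, Set.mem_ofPred_eq]
  by_cases hu : u ∈ f
  · obtain ⟨z, rfl⟩ := Sym2.mem_iff_exists.1 hu
    have hzx : z = x := by_contra fun h => s_notMem_branchEdgeSet h hf
    subst hzx
    simp only [not_true_eq_false, false_iff, not_not]
    refine ⟨?_, u, Sym2.mem_mk_right y u, Sym2.mem_mk_left u z⟩
    rw [Ne, Sym2.eq_swap, Sym2.congr_right]
    exact hxy.symm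
  · refine iff_of_true (fun h => hu (h ▸ Sym2.mem_mk_left u x)) ?_
    rintro ⟨-, v, hv, hvf⟩
    rcases Sym2.mem_iff.1 hv with rfl | rfl
    · exact hxy (eq_of_mem_branchEdgeSet hT hy hx (Set.mem_insert _ _) hf hu
        (Sym2.mem_mk_right u v) hvf).symm
    · exact hu hvf

section Branch

variable {D : Set (Sym2 V)} {x : V}

lemma edgeSet_deleteEdges_eq_insert (hx : T.Adj u x)
    (hD : ∀ e ∈ T.edgeSet, e ∈ D ↔ u ∈ e ∧ e ≠ s(u, x)) :
    (T.deleteEdges D).edgeSet = insert s(u, x) (T.deleteIncidenceSet u).edgeSet := by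
  ext e
  rw [edgeSet_deleteEdges, edgeSet_deleteIncidenceSet, Set.mem_insert_iff, Set.mem_sdiff,
    Set.mem_sdiff]
  by_cases he : e ∈ T.edgeSet
  · have hux : e = s(u, x) → u ∈ e := fun h => h ▸ Sym2.mem_mk_left u x
    simp only [hD e he, incidenceSet, Set.mem_sep_iff]
    tauto
  · refine iff_of_false (fun h => he h.1) ?_
    rintro (rfl | h)
    exacts [he hx, he h.1]

lemma reachable_deleteEdges_iff (hx : T.Adj u x)
    (hD : ∀ e ∈ T.edgeSet, e ∈ D ↔ u ∈ e ∧ e ≠ s(u, x)) {v : V} :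
    (T.deleteEdges D).Reachable x v ↔ v = u ∨ (T.deleteIncidenceSet u).Reachable x v := by
  have hadj : ∀ a b, (T.deleteEdges D).Adj a b ↔
      s(a, b) = s(u, x) ∨ (T.deleteIncidenceSet u).Adj a b := fun a b => by
    rw [← mem_edgeSet, edgeSet_deleteEdges_eq_insert hx hD, Set.mem_insert_iff, mem_edgeSet]
  constructor
  · rintro ⟨w⟩
    suffices ∀ a b (w : (T.deleteEdges D).Walk a b),
        (a = u ∨ (T.deleteIncidenceSet u).Reachable x a) →
        b = u ∨ (T.deleteIncidenceSet u).Reachable x b from this _ _ w (Or.inr .rfl)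
    intro a b w
    induction w with
    | nil => exact id
    | @cons a c b hac w ih =>
      refine fun ha => ih ?_
      rcases (hadj a c).1 hac with he | hH
      · rcases Sym2.eq_iff.1 he with ⟨-, rfl⟩ | ⟨-, rfl⟩
        exacts [Or.inr .rfl, Or.inl rfl]
      · rcases ha with rfl | ha
        · exact absurd rfl (deleteIncidenceSet_adj.1 hH).2.1
        · exact Or.inr (ha.trans hH.reachable)
  · rintro (rfl | h)
    · exact ((hadj x v).2 (Or.inl Sym2.eq_swap)).reachable
    · exact h.mono fun a b h => (hadj a b).2 (Or.inr h)

lemma edgeSet_compG_deleteEdges (hx : T.Adj u x)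
    (hD : ∀ e ∈ T.edgeSet, e ∈ D ↔ u ∈ e ∧ e ≠ s(u, x)) :
    (compG (T.deleteEdges D) x).edgeSet = branchEdgeSet T u x := by
  ext e
  rw [mem_edgeSet_compG, edgeSet_deleteEdges_eq_insert hx hD, branchEdgeSet, Set.mem_insert_iff,
    Set.mem_insert_iff, mem_edgeSet_compG]
  simp only [reachable_deleteEdges_iff hx hD]
  constructor
  · rintro ⟨rfl | he, hr⟩
    · exact Or.inl rfl
    · refine Or.inr ⟨he, fun v hv => (hr v hv).resolve_left ?_⟩
      rintro rfl
      exact notMem_of_mem_edgeSet_deleteIncidenceSet he hv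
  · rintro (rfl | ⟨he, hr⟩)
    · refine ⟨Or.inl rfl, fun v hv => ?_⟩
      rcases Sym2.mem_iff.1 hv with rfl | rfl
      exacts [Or.inl rfl, Or.inr .rfl]
    · exact ⟨Or.inr he, fun v hv => Or.inr (hr v hv)⟩

end Branch

theorem g0bar_eq_add_sum_g0 (hT : T.IsTree) {ι : Type*} [Fintype ι] {p : V} {c : ι → V}
    (hcinj : Function.Injective c) (hcp : ∀ j, c j ≠ p)
    (hnbr : ∀ x, T.Adj u x ↔ x = p ∨ ∃ j, x = c j) {G₀ : SimpleGraph V} {G : ι → SimpleGraph V}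
    (hG₀ : G₀.edgeSet = branchEdgeSet T u p) (hG : ∀ j, (G j).edgeSet = branchEdgeSet T u (c j)) :
    g0bar T s(p, u) = g0bar G₀ s(p, u) + ∑ j, g0 (G j) s(u, c j) := by
  set b : Option ι → V := fun i => i.elim p c
  have hb_inj : b.Injective := by
    rintro (_ | i) (_ | j) h
    exacts [rfl, (hcp j h.symm).elim, (hcp i h).elim, congrArg some (hcinj h)]
  have hb : T.neighborSet u = Set.range b := by
    ext x
    simp [hnbr, Option.exists, b, eq_comm]
  have hub : ∀ i, T.Adj u (b i) := fun i => (hb ▸ Set.mem_range_self i : b i ∈ T.neighborSet u)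
  set G' : Option ι → SimpleGraph V := fun i => i.elim (G₀.deleteEdges {s(p, u)}) G
  have hG' : ∀ i, (G' i).edgeSet = branchEdgeSet T u (b i) \ {s(p, u)} := by
    rintro (_ | j)
    · show (G₀.deleteEdges {s(p, u)}).edgeSet = branchEdgeSet T u p \ _
      rw [edgeSet_deleteEdges, hG₀]
    · show (G j).edgeSet = branchEdgeSet T u (c j) \ _
      rw [hG j, Set.sdiff_singleton_eq_self]
      rw [Sym2.eq_swap]
      exact s_notMem_branchEdgeSet (hcp j).symm
  have hcover : (T.deleteEdges {s(p, u)}).edgeSet = ⋃ i, (G' i).edgeSet := by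
    simp_rw [hG', ← Set.iUnion_sdiff, edgeSet_deleteEdges,
      edgeSet_eq_iUnion_branchEdgeSet hT.connected (u := u), hb, Set.biUnion_range]
  have hsep : ∀ i k, ∀ g ∈ (G' i).edgeSet, ∀ f ∈ (G' k).edgeSet, f ∈ {f | ¬ eAdj s(p, u) f} →
      ∀ v ∈ g, v ∈ f → i = k := by
    intro i k g hg f hf hfA v hvg hvf
    rw [hG'] at hg hf
    have hu : u ∉ f := fun hu => hfA ⟨Ne.symm hf.2, u, Sym2.mem_mk_right p u, hu⟩
    exact hb_inj (eq_of_mem_branchEdgeSet hT.isAcyclic (hub i) (hub k) hg.1 hf.1 hu hvg hvf)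
  rw [g0bar_eq_tedNumWithin, g0bar_eq_tedNumWithin, tedNumWithin_eq_sum hcover hsep,
    Fintype.sum_option]
  congr 1
  exact Finset.sum_congr rfl fun j _ => (g0_eq_tedNumWithin_of_edgeSet_eq_branchEdgeSet
    hT.isAcyclic (hub (some j)) (hub none) (hcp j) (hG j)).symm

end Star

theorem stmt15_general
    {V : Type*} (T : SimpleGraph V)
    (hT : T.IsTree)
    (p u : V)
    (q : ℕ) (c : Fin q → V) (hcinj : Function.Injective c)
    (hcp : ∀ j, c j ≠ p)
    (hnbr : ∀ x : V, T.Adj u x ↔ (x = p ∨ ∃ j : Fin q, x = c j)) :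
    g0bar T s(p, u) =
      g0bar (compG (T.deleteEdges (Set.range fun j : Fin q => s(u, c j))) u) s(p, u) +
      ∑ j : Fin q,
        g0 (compG (T.deleteEdges (((Set.range fun i : Fin q => s(u, c i)) ∪ {s(p, u)}) \ {s(u, c j)})) (c j))
          s(u, c j) := by
  have hup : T.Adj u p := (hnbr p).2 (Or.inl rfl)
  have hpR : s(u, p) ∉ Set.range fun i => s(u, c i) := fun ⟨j, h⟩ => hcp j (Sym2.congr_right.1 h)
  have hstar : ∀ e ∈ T.edgeSet, e ∈ (Set.range fun i => s(u, c i)) ∪ {s(p, u)} ↔ u ∈ e := by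
    refine fun e he => ⟨?_, fun hu => ?_⟩
    · rintro (⟨i, rfl⟩ | rfl)
      exacts [Sym2.mem_mk_left _ _, Sym2.mem_mk_right _ _]
    · obtain ⟨y, rfl⟩ := Sym2.mem_iff_exists.1 hu
      rcases (hnbr y).1 he with rfl | ⟨j, rfl⟩
      exacts [Or.inr Sym2.eq_swap, Or.inl ⟨j, rfl⟩]
  have hrange : ∀ e ∈ T.edgeSet, e ∈ (Set.range fun i => s(u, c i)) ↔ u ∈ e ∧ e ≠ s(u, p) := by
    intro e he
    rw [← hstar e he, Set.mem_union, Set.mem_singleton_iff, Sym2.eq_swap (a := p)]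
    exact ⟨fun h => ⟨Or.inl h, fun h' => hpR (h' ▸ h)⟩, fun ⟨h, hne⟩ => h.resolve_right hne⟩
  refine g0bar_eq_add_sum_g0 hT hcinj hcp hnbr ?_
    fun j => edgeSet_compG_deleteEdges ((hnbr (c j)).2 (Or.inr ⟨j, rfl⟩)) fun e he => ?_
  · rw [compG_eq_of_reachable (deleteEdges_adj.2 ⟨hup, hpR⟩).reachable]
    exact edgeSet_compG_deleteEdges hup hrange
  · rw [Set.mem_sdiff, hstar e he, Set.mem_singleton_iff]

theorem stmt15
    {V : Type*} [Fintype V] [DecidableEq V] (T : SimpleGraph V) [DecidableRel T.Adj]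
    (hT : T.IsTree) (r : V) (hr : T.degree r = 1)
    (p u : V) (hpu : T.Adj p u) (hdown : T.dist r p + 1 = T.dist r u)
    (hnonleaf : 2 ≤ T.degree p ∧ 2 ≤ T.degree u)
    (q : ℕ) (hq : 1 ≤ q) (c : Fin q → V) (hcinj : Function.Injective c)
    (hcp : ∀ j, c j ≠ p)
    (hnbr : ∀ x : V, T.Adj u x ↔ (x = p ∨ ∃ j : Fin q, x = c j)) :
    g0bar T s(p, u) =
      g0bar (compG (T.deleteEdges (Set.range fun j : Fin q => s(u, c j))) u) s(p, u) +
      ∑ j : Fin q,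
        g0 (compG (T.deleteEdges (((Set.range fun i : Fin q => s(u, c i)) ∪ {s(p, u)}) \ {s(u, c j)})) (c j))
          s(u, c j) :=
  stmt15_general T hT p u q c hcinj hcp hnbr
end

section
/- Let T be a rooted tree, e⁰ a non-leaf edge with children neighbor edges e¹,…,e^q and subtrees T⁰,…,T^q as above. Then γ'_{1̄}(T, e⁰) = γ'_{1̄}(T⁰, e⁰) + Σ_{j=1}^q min{γ'₀(T^j, e^j), γ'_{0̄}(T^j, e^j)}. -/
open SimpleGraph

variable {V : Type*}

/-!
The edges of `T` split along the branches of `T` at `u`: the piece through `p`, which contains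
`e⁰ = pu`, and for each `j` the piece through `cⱼ`, which contains `eʲ = ucⱼ`. An edge that is not
the root edge of its piece has all its neighbours inside its piece, and the `eʲ` all touch `e⁰`.
So a dominating set `F` in which `e⁰` is the unique isolated edge restricts to such a set on the
first piece and to a total edge dominating set of `Tʲ - eʲ` on the others (`eʲ ∉ F` since `e⁰` is
isolated); conversely such sets glue together, each `eʲ` being dominated by `e⁰`. A total edge
dominating set of `Tʲ - eʲ` is counted by `γ'₀` or by `γ'_{0̄}` according to whether it dominates
`eʲ`, whence the minimum of the two.
-/

open Function

lemma eAdj_comm {e f : Sym2 V} : eAdj e f ↔ eAdj f e :=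
  ⟨fun ⟨hne, v, he, hf⟩ => ⟨hne.symm, v, hf, he⟩, fun ⟨hne, v, hf, he⟩ => ⟨hne.symm, v, he, hf⟩⟩

section Encard

variable {α : Type*}

lemma sInf_ncard_eq_iInf_encard (P : Set α → Prop) :
    sInf {n : ℕ∞ | ∃ F, P F ∧ F.Finite ∧ (F.ncard : ℕ∞) = n} = ⨅ (F) (_ : P F), F.encard := by
  refine le_antisymm (le_iInf₂ fun F hF => ?_) (le_sInf ?_)
  · rcases F.finite_or_infinite with hfin | hinf
    · exact sInf_le ⟨F, hF, hfin, hfin.cast_ncard_eq⟩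
    · simp [hinf.encard_eq]
  · rintro n ⟨F, hF, hfin, rfl⟩
    exact (iInf₂_le F hF).trans_eq hfin.cast_ncard_eq.symm

lemma exists_encard_eq_iInf {P : Set α → Prop} (h : ⨅ (F) (_ : P F), F.encard ≠ ⊤) :
    ∃ F, P F ∧ F.encard = ⨅ (F) (_ : P F), F.encard := by
  rw [iInf_subtype'] at h ⊢
  have : Nonempty {F // P F} := not_isEmpty_iff.1 fun _ => h (iInf_of_empty _)
  obtain ⟨⟨F, hF⟩, hF'⟩ := ciInf_mem fun F : {F // P F} => F.1.encard
  exact ⟨F, hF, hF'⟩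

lemma encard_union_iUnion {ι : Type*} [Fintype ι] {A : Set α} {B : ι → Set α}
    (hA : ∀ j, Disjoint A (B j)) (hB : Pairwise (Disjoint on B)) :
    (A ∪ ⋃ j, B j).encard = A.encard + ∑ j, (B j).encard := by
  rw [Set.encard_union_eq (Set.disjoint_iUnion_right.2 hA), Set.encard_iUnion_of_finite hB,
    finsum_eq_sum_of_fintype]

end Encard

structure IsEDSUniqueIsolated (G : SimpleGraph V) (e : Sym2 V) (F : Set (Sym2 V)) : Prop where
  isEDS : IsEDS G F
  mem : e ∈ F
  not_eAdj : ∀ f ∈ F, ¬ eAdj e f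
  exists_eAdj_of_mem : ∀ f ∈ F, f ≠ e → ∃ f' ∈ F, eAdj f f'

lemma isEDSUniqueIsolated_iff {G : SimpleGraph V} {e : Sym2 V} {F : Set (Sym2 V)} :
    IsEDSUniqueIsolated G e F ↔
      IsEDS G F ∧ e ∈ F ∧ (∀ f ∈ F, ¬ eAdj e f) ∧ (∀ f ∈ F, f ≠ e → ∃ f' ∈ F, eAdj f f') :=
  ⟨fun h => ⟨h.1, h.2, h.3, h.4⟩, fun ⟨h₁, h₂, h₃, h₄⟩ => ⟨h₁, h₂, h₃, h₄⟩⟩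

lemma g1bar_eq_iInf (G : SimpleGraph V) (e : Sym2 V) :
    g1bar G e = ⨅ (F) (_ : IsEDSUniqueIsolated G e F), F.encard := by
  rw [← sInf_ncard_eq_iInf_encard]
  simp only [g1bar, isEDSUniqueIsolated_iff, and_assoc]

lemma IsEDSUniqueIsolated.exists_eAdj {G : SimpleGraph V} {e f : Sym2 V} {F : Set (Sym2 V)}
    (hF : IsEDSUniqueIsolated G e F) (hf : f ∈ G.edgeSet) (hfe : f ≠ e) : ∃ g ∈ F, eAdj f g := by
  by_cases hfF : f ∈ F
  · exact hF.exists_eAdj_of_mem f hfF hfe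
  · exact hF.isEDS.2 f hf hfF

lemma isTEDS_deleteEdges_iff {G : SimpleGraph V} {e : Sym2 V} {F : Set (Sym2 V)} :
    IsTEDS (G.deleteEdges {e}) F ↔
      (IsTEDS G F ∧ e ∉ F) ∨ (IsTEDS (G.deleteEdges {e}) F ∧ ∀ f ∈ F, ¬ eAdj e f) := by
  simp only [IsTEDS, edgeSet_deleteEdges]
  constructor
  · intro h
    by_cases he : ∃ f ∈ F, eAdj e f
    · refine Or.inl ⟨⟨fun f hf => (h.1 hf).1, fun f hf => ?_⟩, fun heF => (h.1 heF).2 rfl⟩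
      by_cases hfe : f = e
      · exact hfe ▸ he
      · exact h.2 f ⟨hf, hfe⟩
    · exact Or.inr ⟨h, fun f hf hef => he ⟨f, hf, hef⟩⟩
  · rintro (⟨⟨hsub, hdom⟩, he⟩ | ⟨h, -⟩)
    · exact ⟨fun f hf => ⟨hsub hf, fun hfe => he (hfe ▸ hf)⟩, fun f hf => hdom f hf.1⟩
    · exact h

lemma min_g0_g0bar_eq_iInf (G : SimpleGraph V) (e : Sym2 V) :
    min (g0 G e) (g0bar G e) = ⨅ (F) (_ : IsTEDS (G.deleteEdges {e}) F), F.encard := by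
  have h0 : g0 G e = ⨅ (F) (_ : IsTEDS G F ∧ e ∉ F), F.encard := by
    rw [← sInf_ncard_eq_iInf_encard]
    simp only [g0, and_assoc]
  have h0bar : g0bar G e =
      ⨅ (F) (_ : IsTEDS (G.deleteEdges {e}) F ∧ ∀ f ∈ F, ¬ eAdj e f), F.encard := by
    rw [← sInf_ncard_eq_iInf_encard]
    simp only [g0bar, and_assoc]
  change g0 G e ⊓ g0bar G e = _
  rw [h0, h0bar, ← iInf_inf_eq]
  refine iInf_congr fun F => ?_
  exact (iInf_or (s := fun _ => F.encard)).symm.trans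
    (iInf_congr_Prop isTEDS_deleteEdges_iff.symm fun _ => rfl)

structure IsEdgeSplit {ι : Type*} (T G₀ : SimpleGraph V) (G : ι → SimpleGraph V) (e₀ : Sym2 V)
    (e : ι → Sym2 V) : Prop where
  edgeSet_eq : T.edgeSet = G₀.edgeSet ∪ ⋃ j, (G j).edgeSet
  disjoint_zero : ∀ j, Disjoint G₀.edgeSet (G j).edgeSet
  pairwise_disjoint : Pairwise (Disjoint on fun j => (G j).edgeSet)
  root_mem_zero : e₀ ∈ G₀.edgeSet
  eAdj_root : ∀ j, eAdj (e j) e₀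
  mem_zero_of_eAdj : ∀ f ∈ G₀.edgeSet, f ≠ e₀ → ∀ g ∈ T.edgeSet, eAdj f g → g ∈ G₀.edgeSet
  mem_of_eAdj : ∀ j, ∀ f ∈ (G j).edgeSet, f ≠ e j → ∀ g ∈ T.edgeSet, eAdj f g → g ∈ (G j).edgeSet

namespace IsEdgeSplit

variable {ι : Type*} {T G₀ : SimpleGraph V} {G : ι → SimpleGraph V} {e₀ : Sym2 V}
  {e : ι → Sym2 V} {F F₀ : Set (Sym2 V)} {Fs : ι → Set (Sym2 V)}

lemma edgeSet_zero_subset (h : IsEdgeSplit T G₀ G e₀ e) : G₀.edgeSet ⊆ T.edgeSet :=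
  h.edgeSet_eq ▸ Set.subset_union_left

lemma edgeSet_subset (h : IsEdgeSplit T G₀ G e₀ e) (j : ι) : (G j).edgeSet ⊆ T.edgeSet :=
  h.edgeSet_eq ▸ (Set.subset_iUnion (fun j => (G j).edgeSet) j).trans Set.subset_union_right

lemma isEDSUniqueIsolated_inter_zero (h : IsEdgeSplit T G₀ G e₀ e)
    (hF : IsEDSUniqueIsolated T e₀ F) : IsEDSUniqueIsolated G₀ e₀ (F ∩ G₀.edgeSet) := by
  have hnbr : ∀ f ∈ G₀.edgeSet, f ≠ e₀ → ∃ g ∈ F ∩ G₀.edgeSet, eAdj f g := fun f hf hfe => by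
    obtain ⟨g, hg, hfg⟩ := hF.exists_eAdj (h.edgeSet_zero_subset hf) hfe
    exact ⟨g, ⟨hg, h.mem_zero_of_eAdj f hf hfe g (hF.isEDS.1 hg) hfg⟩, hfg⟩
  have he₀ : e₀ ∈ F ∩ G₀.edgeSet := ⟨hF.mem, h.root_mem_zero⟩
  refine ⟨⟨Set.inter_subset_right, fun f hf hfF => hnbr f hf ?_⟩, he₀,
    fun f hf => hF.not_eAdj f hf.1, fun f hf => hnbr f hf.2⟩
  rintro rfl
  exact hfF he₀

lemma isTEDS_inter (h : IsEdgeSplit T G₀ G e₀ e) (hF : IsEDSUniqueIsolated T e₀ F) (j : ι) :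
    IsTEDS ((G j).deleteEdges {e j}) (F ∩ (G j).edgeSet) := by
  rw [IsTEDS, edgeSet_deleteEdges]
  refine ⟨fun f hf => ⟨hf.2, ?_⟩, fun f hf => ?_⟩
  · rintro rfl
    exact hF.not_eAdj _ hf.1 (eAdj_comm.1 (h.eAdj_root j))
  · have hfe₀ : f ≠ e₀ := fun hfe => (h.disjoint_zero j).ne_of_mem h.root_mem_zero hf.1 hfe.symm
    obtain ⟨g, hg, hfg⟩ := hF.exists_eAdj (h.edgeSet_subset j hf.1) hfe₀
    exact ⟨g, ⟨hg, h.mem_of_eAdj j f hf.1 hf.2 g (hF.isEDS.1 hg) hfg⟩, hfg⟩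

lemma isEDSUniqueIsolated_union (h : IsEdgeSplit T G₀ G e₀ e) (hF₀ : IsEDSUniqueIsolated G₀ e₀ F₀)
    (hFs : ∀ j, IsTEDS ((G j).deleteEdges {e j}) (Fs j)) :
    IsEDSUniqueIsolated T e₀ (F₀ ∪ ⋃ j, Fs j) := by
  have hsub : ∀ j, Fs j ⊆ (G j).edgeSet \ {e j} :=
    fun j => (hFs j).1.trans (edgeSet_deleteEdges _).subset
  refine ⟨⟨?_, fun f hf hfF => ?_⟩, Or.inl hF₀.mem, ?_, ?_⟩
  · exact Set.union_subset (hF₀.isEDS.1.trans h.edgeSet_zero_subset)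
      (Set.iUnion_subset fun j => (hsub j).trans (Set.sdiff_subset.trans (h.edgeSet_subset j)))
  · rw [h.edgeSet_eq] at hf
    obtain hf | hf := hf
    · obtain ⟨g, hg, hfg⟩ := hF₀.isEDS.2 f hf fun h => hfF (Or.inl h)
      exact ⟨g, Or.inl hg, hfg⟩
    · obtain ⟨j, hf⟩ := Set.mem_iUnion.1 hf
      by_cases hfe : f = e j
      · exact ⟨e₀, Or.inl hF₀.mem, hfe ▸ h.eAdj_root j⟩
      · obtain ⟨g, hg, hfg⟩ := (hFs j).2 f (by rw [edgeSet_deleteEdges]; exact ⟨hf, hfe⟩)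
        exact ⟨g, Or.inr (Set.mem_iUnion.2 ⟨j, hg⟩), hfg⟩
  · rintro f (hf | hf) hadj
    · exact hF₀.not_eAdj f hf hadj
    · obtain ⟨j, hf⟩ := Set.mem_iUnion.1 hf
      have he₀ : e₀ ∈ (G j).edgeSet := h.mem_of_eAdj j f (hsub j hf).1 (hsub j hf).2 e₀
        (h.edgeSet_zero_subset h.root_mem_zero) (eAdj_comm.1 hadj)
      exact (h.disjoint_zero j).ne_of_mem h.root_mem_zero he₀ rfl
  · rintro f (hf | hf) hfe
    · obtain ⟨g, hg, hfg⟩ := hF₀.exists_eAdj_of_mem f hf hfe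
      exact ⟨g, Or.inl hg, hfg⟩
    · obtain ⟨j, hf⟩ := Set.mem_iUnion.1 hf
      obtain ⟨g, hg, hfg⟩ := (hFs j).2 f ((hFs j).1 hf)
      exact ⟨g, Or.inr (Set.mem_iUnion.2 ⟨j, hg⟩), hfg⟩

variable [Fintype ι]

lemma encard_union_iUnion_eq (h : IsEdgeSplit T G₀ G e₀ e) (hF₀ : F₀ ⊆ G₀.edgeSet)
    (hFs : ∀ j, Fs j ⊆ (G j).edgeSet) :
    (F₀ ∪ ⋃ j, Fs j).encard = F₀.encard + ∑ j, (Fs j).encard :=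
  encard_union_iUnion (fun j => (h.disjoint_zero j).mono hF₀ (hFs j))
    fun i j hij => (h.pairwise_disjoint hij).mono (hFs i) (hFs j)

lemma encard_eq (h : IsEdgeSplit T G₀ G e₀ e) (hF : F ⊆ T.edgeSet) :
    F.encard = (F ∩ G₀.edgeSet).encard + ∑ j, (F ∩ (G j).edgeSet).encard := by
  rw [← h.encard_union_iUnion_eq Set.inter_subset_right fun j => Set.inter_subset_right,
    ← Set.inter_iUnion, ← Set.inter_union_distrib_left, ← h.edgeSet_eq, Set.inter_eq_left.2 hF]

theorem g1bar_eq (h : IsEdgeSplit T G₀ G e₀ e) :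
    g1bar T e₀ = g1bar G₀ e₀ + ∑ j, min (g0 (G j) (e j)) (g0bar (G j) (e j)) := by
  simp only [g1bar_eq_iInf, min_g0_g0bar_eq_iInf]
  refine le_antisymm ?_ (le_iInf₂ fun F hF => ?_)
  · by_cases htop : (⨅ (F) (_ : IsEDSUniqueIsolated G₀ e₀ F), F.encard) = ⊤ ∨
        ∃ j, (⨅ (F) (_ : IsTEDS ((G j).deleteEdges {e j}) F), F.encard) = ⊤
    · exact le_top.trans (top_le_iff.2 (by simpa using htop))
    rw [not_or, not_exists] at htop
    obtain ⟨F₀, hF₀, hF₀card⟩ := exists_encard_eq_iInf htop.1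
    choose Fs hFs hFscard using fun j => exists_encard_eq_iInf (htop.2 j)
    calc _ ≤ (F₀ ∪ ⋃ j, Fs j).encard := iInf₂_le _ (h.isEDSUniqueIsolated_union hF₀ hFs)
      _ = _ := by
        rw [h.encard_union_iUnion_eq hF₀.isEDS.1
          fun j => ((hFs j).1.trans (edgeSet_deleteEdges _).subset).trans Set.sdiff_subset,
          hF₀card]
        simp only [hFscard]
  · rw [h.encard_eq hF.isEDS.1]
    exact add_le_add (iInf₂_le _ (h.isEDSUniqueIsolated_inter_zero hF))
      (Finset.sum_le_sum fun j _ => iInf₂_le _ (h.isTEDS_inter hF j))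

end IsEdgeSplit

namespace SimpleGraph

variable {G T : SimpleGraph V} {u x y : V}

lemma Reachable.mem_of_adj_closed {S : Set V} (hS : ∀ a b, G.Adj a b → a ∈ S → b ∈ S)
    {a b : V} (h : G.Reachable a b) (ha : a ∈ S) : b ∈ S := by
  obtain ⟨w⟩ := h
  induction w with
  | nil => exact ha
  | cons hadj _ ih => exact ih (hS _ _ hadj ha)

variable (T u) in
def branchSet (x : V) : Set V := insert u {v | (T.deleteIncidenceSet u).Reachable x v}

lemma center_mem_branchSet : u ∈ T.branchSet u x := Set.mem_insert _ _

lemma self_mem_branchSet : x ∈ T.branchSet u x := Set.mem_insert_of_mem _ (Reachable.refl x)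

lemma mem_branchSet_of_adj {a b : V} (ha : a ∈ T.branchSet u x) (hau : a ≠ u)
    (hab : T.Adj a b) : b ∈ T.branchSet u x := by
  rcases eq_or_ne b u with rfl | hbu
  · exact center_mem_branchSet
  · have hxa : (T.deleteIncidenceSet u).Reachable x a := (Set.mem_insert_iff.1 ha).resolve_left hau
    exact Set.mem_insert_of_mem _ (hxa.trans (deleteIncidenceSet_adj.2 ⟨hab, hau, hbu⟩).reachable)

lemma eq_of_adj_of_mem_branchSet (hT : T.IsAcyclic) (hx : T.Adj u x) (hy : T.Adj u y)
    (hyx : y ∈ T.branchSet u x) : y = x := by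
  by_contra hne
  have hxy : (T.deleteIncidenceSet u).Reachable x y :=
    (Set.mem_insert_iff.1 hyx).resolve_left hy.ne'
  have hle : T.deleteIncidenceSet u ≤ T.deleteEdges {s(u, x)} :=
    deleteEdges_anti (Set.singleton_subset_iff.2 ⟨hx, Sym2.mem_mk_left _ _⟩)
  have hyu : (T.deleteEdges {s(u, x)}).Adj y u := by
    refine deleteEdges_adj.2 ⟨hy.symm, ?_⟩
    simp [hne, hx.ne]
  exact isAcyclic_iff_forall_adj_isBridge.1 hT hx ((hxy.mono hle).trans hyu.reachable).symm

lemma eq_of_mem_branchSet_of_mem_branchSet (hT : T.IsAcyclic) (hx : T.Adj u x) (hy : T.Adj u y)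
    {w : V} (hwu : w ≠ u) (hwx : w ∈ T.branchSet u x) (hwy : w ∈ T.branchSet u y) : y = x := by
  have hxw : (T.deleteIncidenceSet u).Reachable x w := (Set.mem_insert_iff.1 hwx).resolve_left hwu
  have hyw : (T.deleteIncidenceSet u).Reachable y w := (Set.mem_insert_iff.1 hwy).resolve_left hwu
  exact eq_of_adj_of_mem_branchSet hT hx hy (Set.mem_insert_of_mem _ (hxw.trans hyw.symm))

lemma exists_mem_branchSet (hT : T.Connected) (v : V) :
    v = u ∨ ∃ x, T.Adj u x ∧ v ∈ T.branchSet u x := by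
  refine (hT.preconnected u v).mem_of_adj_closed
    (S := {v | v = u ∨ ∃ x, T.Adj u x ∧ v ∈ T.branchSet u x}) (fun a b hab ha => ?_) (Or.inl rfl)
  rcases eq_or_ne a u with rfl | hau
  · exact Or.inr ⟨b, hab, self_mem_branchSet⟩
  · obtain ⟨x, hx, hax⟩ := ha.resolve_left hau
    exact Or.inr ⟨x, hx, mem_branchSet_of_adj hax hau hab⟩

lemma exists_mem_ne_of_mem_edgeSet {f : Sym2 V} (hf : f ∈ T.edgeSet) (v : V) : ∃ w ∈ f, w ≠ v := by
  induction f with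
  | h a b =>
    rcases eq_or_ne a v with rfl | hav
    · exact ⟨b, Sym2.mem_mk_right _ _, (T.ne_of_adj hf).symm⟩
    · exact ⟨a, Sym2.mem_mk_left _ _, hav⟩

lemma exists_mem_branchSet_sym2 (hT : T.Connected) {f : Sym2 V} (hf : f ∈ T.edgeSet) :
    ∃ x, T.Adj u x ∧ f ∈ (T.branchSet u x).sym2 := by
  induction f with
  | h a b =>
    rcases eq_or_ne a u with rfl | hau
    · exact ⟨b, hf, Set.mk_mem_sym2_iff.2 ⟨center_mem_branchSet, self_mem_branchSet⟩⟩
    · obtain ⟨x, hx, ha⟩ := (exists_mem_branchSet hT a).resolve_left hau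
      exact ⟨x, hx, Set.mk_mem_sym2_iff.2 ⟨ha, mem_branchSet_of_adj ha hau hf⟩⟩

lemma disjoint_edgeSet_inter_branchSet_sym2 (hT : T.IsAcyclic) (hx : T.Adj u x)
    (hy : T.Adj u y) (hxy : x ≠ y) :
    Disjoint (T.edgeSet ∩ (T.branchSet u x).sym2) (T.edgeSet ∩ (T.branchSet u y).sym2) := by
  refine Set.disjoint_left.2 fun f ⟨hf, hfx⟩ ⟨_, hfy⟩ => ?_
  obtain ⟨w, hw, hwu⟩ := exists_mem_ne_of_mem_edgeSet hf u
  exact hxy (eq_of_mem_branchSet_of_mem_branchSet hT hx hy hwu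
    (Set.mem_sym2_iff_subset.1 hfx hw) (Set.mem_sym2_iff_subset.1 hfy hw)).symm

lemma mem_branchSet_sym2_of_eAdj (hT : T.IsAcyclic) (hx : T.Adj u x) {f g : Sym2 V}
    (hf : f ∈ T.edgeSet ∩ (T.branchSet u x).sym2) (hfx : f ≠ s(u, x)) (hg : g ∈ T.edgeSet)
    (hfg : eAdj f g) : g ∈ (T.branchSet u x).sym2 := by
  obtain ⟨-, w, hwf, hwg⟩ := hfg
  obtain ⟨w', rfl⟩ := Sym2.mem_iff_exists.1 hwf
  obtain ⟨z, rfl⟩ := Sym2.mem_iff_exists.1 hwg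
  obtain ⟨hw, hw'⟩ := Set.mk_mem_sym2_iff.1 hf.2
  have hwu : w ≠ u := by
    rintro rfl
    exact hfx (congrArg _ (eq_of_adj_of_mem_branchSet hT hx hf.1 hw'))
  exact Set.mk_mem_sym2_iff.2 ⟨hw, mem_branchSet_of_adj hw hwu hg⟩

lemma reachable_deleteEdges_iff_mem_branchSet (hx : T.Adj u x) {v : V} :
    (T.deleteEdges (T.incidenceSet u \ {s(u, x)})).Reachable x v ↔ v ∈ T.branchSet u x := by
  constructor
  · refine fun h => h.mem_of_adj_closed (fun a b hab ha => ?_) self_mem_branchSet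
    rw [deleteEdges_adj] at hab
    rcases eq_or_ne a u with rfl | hau
    · have hbx : s(a, b) = s(a, x) := by
        by_contra hne
        exact hab.2 ⟨⟨hab.1, Sym2.mem_mk_left _ _⟩, hne⟩
      rw [Sym2.congr_right.1 hbx]
      exact self_mem_branchSet
    · exact mem_branchSet_of_adj ha hau hab.1
  · rintro (rfl | hv)
    · exact (deleteEdges_adj.2 ⟨hx.symm, fun h => h.2 Sym2.eq_swap⟩).reachable
    · exact hv.mono (deleteEdges_anti Set.sdiff_subset)

lemma edgeSet_compG_deleteEdges (hT : T.IsAcyclic) (hx : T.Adj u x) {v : V}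
    (hv : v ∈ T.branchSet u x) :
    (compG (T.deleteEdges (T.incidenceSet u \ {s(u, x)})) v).edgeSet =
      T.edgeSet ∩ (T.branchSet u x).sym2 := by
  have hreach : ∀ w, (T.deleteEdges (T.incidenceSet u \ {s(u, x)})).Reachable v w ↔
      w ∈ T.branchSet u x := fun w => by
    rw [← reachable_deleteEdges_iff_mem_branchSet hx] at hv ⊢
    exact ⟨hv.trans, hv.symm.trans⟩
  ext f
  induction f with
  | h a b =>
    simp only [Set.mem_inter_iff, mem_edgeSet, Set.mk_mem_sym2_iff]
    constructor
    · rintro ⟨hab, hva⟩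
      exact ⟨deleteEdges_le _ hab, (hreach a).1 hva, (hreach b).1 (hva.trans hab.reachable)⟩
    · rintro ⟨hab, ha, hb⟩
      refine ⟨deleteEdges_adj.2 ⟨hab, fun ⟨⟨_, hu⟩, hne⟩ => hne ?_⟩, (hreach a).2 ha⟩
      rcases Sym2.mem_iff.1 hu with rfl | rfl
      · rw [eq_of_adj_of_mem_branchSet hT hx hab hb]
        exact Set.mem_singleton _
      · rw [eq_of_adj_of_mem_branchSet hT hx hab.symm ha, Sym2.eq_swap]
        exact Set.mem_singleton _

variable {ι : Type*} {p : V} {c : ι → V}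

lemma incidenceSet_eq_of_forall_adj_iff (hnbr : ∀ x, T.Adj u x ↔ x = p ∨ ∃ j, x = c j) :
    T.incidenceSet u = (Set.range fun j => s(u, c j)) ∪ {s(p, u)} := by
  ext f
  constructor
  · rintro ⟨hf, hu⟩
    obtain ⟨x, rfl⟩ := Sym2.mem_iff_exists.1 hu
    rcases (hnbr x).1 hf with rfl | ⟨j, rfl⟩
    · exact Or.inr Sym2.eq_swap
    · exact Or.inl ⟨j, rfl⟩
  · rintro (⟨j, rfl⟩ | rfl)
    · exact ⟨(hnbr _).2 (Or.inr ⟨j, rfl⟩), Sym2.mem_mk_left _ _⟩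
    · exact ⟨((hnbr p).2 (Or.inl rfl)).symm, Sym2.mem_mk_right _ _⟩

theorem isEdgeSplit_of_edgeSet_eq_branchSet (hT : T.IsTree) (hc : Injective c)
    (hcp : ∀ j, c j ≠ p) (hnbr : ∀ x, T.Adj u x ↔ x = p ∨ ∃ j, x = c j)
    {G₀ : SimpleGraph V} {G : ι → SimpleGraph V}
    (hG₀ : G₀.edgeSet = T.edgeSet ∩ (T.branchSet u p).sym2)
    (hG : ∀ j, (G j).edgeSet = T.edgeSet ∩ (T.branchSet u (c j)).sym2) :
    IsEdgeSplit T G₀ G s(p, u) fun j => s(u, c j) := by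
  have hp : T.Adj u p := (hnbr p).2 (Or.inl rfl)
  have hcj : ∀ j, T.Adj u (c j) := fun j => (hnbr (c j)).2 (Or.inr ⟨j, rfl⟩)
  refine ⟨?_, fun j => ?_, fun i j hij => ?_, ?_, fun j => ?_, ?_, fun j => ?_⟩
  · refine Set.Subset.antisymm (fun f hf => ?_) (Set.union_subset (hG₀ ▸ Set.inter_subset_left)
      (Set.iUnion_subset fun j => hG j ▸ Set.inter_subset_left))
    obtain ⟨x, hx, hfx⟩ := exists_mem_branchSet_sym2 hT.connected hf
    rcases (hnbr x).1 hx with rfl | ⟨j, rfl⟩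
    · exact Or.inl (hG₀ ▸ ⟨hf, hfx⟩)
    · exact Or.inr (Set.mem_iUnion.2 ⟨j, hG j ▸ ⟨hf, hfx⟩⟩)
  · rw [hG₀, hG]
    exact disjoint_edgeSet_inter_branchSet_sym2 hT.isAcyclic hp (hcj j) (hcp j).symm
  · rw [onFun, hG, hG]
    exact disjoint_edgeSet_inter_branchSet_sym2 hT.isAcyclic (hcj i) (hcj j) (hc.ne hij)
  · rw [hG₀]
    exact ⟨hp.symm, self_mem_branchSet, center_mem_branchSet⟩
  · refine ⟨fun h => ?_, u, Sym2.mem_mk_left _ _, Sym2.mem_mk_right _ _⟩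
    rcases Sym2.eq_iff.1 h with ⟨h, -⟩ | ⟨-, h⟩
    exacts [hp.ne h, hcp j h]
  · rw [hG₀]
    intro f hf hfe g hg hfg
    exact ⟨hg, mem_branchSet_sym2_of_eAdj hT.isAcyclic hp hf (by rwa [Sym2.eq_swap]) hg hfg⟩
  · rw [hG]
    intro f hf hfe g hg hfg
    exact ⟨hg, mem_branchSet_sym2_of_eAdj hT.isAcyclic (hcj j) hf hfe hg hfg⟩

end SimpleGraph

theorem stmt16_general
    {V : Type*} (T : SimpleGraph V)
    (hT : T.IsTree)
    (p u : V)
    (q : ℕ) (c : Fin q → V) (hcinj : Function.Injective c)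
    (hcp : ∀ j, c j ≠ p)
    (hnbr : ∀ x : V, T.Adj u x ↔ (x = p ∨ ∃ j : Fin q, x = c j)) :
    g1bar T s(p, u) =
      g1bar (compG (T.deleteEdges (Set.range fun j : Fin q => s(u, c j))) u) s(p, u) +
      ∑ j : Fin q,
        min
          (g0 (compG (T.deleteEdges (((Set.range fun i : Fin q => s(u, c i)) ∪ {s(p, u)}) \ {s(u, c j)})) (c j))
            s(u, c j))
          (g0bar (compG (T.deleteEdges (((Set.range fun i : Fin q => s(u, c i)) ∪ {s(p, u)}) \ {s(u, c j)})) (c j))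
            s(u, c j)) := by
  have hp : T.Adj u p := (hnbr p).2 (Or.inl rfl)
  have hinc := incidenceSet_eq_of_forall_adj_iff hnbr
  have hrange : (Set.range fun j => s(u, c j)) = T.incidenceSet u \ {s(u, p)} := by
    rw [hinc, Sym2.eq_swap (a := p), Set.union_sdiff_right, Set.sdiff_singleton_eq_self]
    rintro ⟨j, hj⟩
    exact hcp j (Sym2.congr_right.1 hj)
  refine (isEdgeSplit_of_edgeSet_eq_branchSet hT hcinj hcp hnbr ?_ fun j => ?_).g1bar_eq
  · rw [hrange]
    exact edgeSet_compG_deleteEdges hT.isAcyclic hp center_mem_branchSet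
  · rw [← hinc]
    exact edgeSet_compG_deleteEdges hT.isAcyclic ((hnbr _).2 (Or.inr ⟨j, rfl⟩)) self_mem_branchSet

theorem stmt16
    {V : Type*} [Fintype V] [DecidableEq V] (T : SimpleGraph V) [DecidableRel T.Adj]
    (hT : T.IsTree) (r : V) (hr : T.degree r = 1)
    (p u : V) (hpu : T.Adj p u) (hdown : T.dist r p + 1 = T.dist r u)
    (hnonleaf : 2 ≤ T.degree p ∧ 2 ≤ T.degree u)
    (q : ℕ) (hq : 1 ≤ q) (c : Fin q → V) (hcinj : Function.Injective c)
    (hcp : ∀ j, c j ≠ p)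
    (hnbr : ∀ x : V, T.Adj u x ↔ (x = p ∨ ∃ j : Fin q, x = c j)) :
    g1bar T s(p, u) =
      g1bar (compG (T.deleteEdges (Set.range fun j : Fin q => s(u, c j))) u) s(p, u) +
      ∑ j : Fin q,
        min
          (g0 (compG (T.deleteEdges (((Set.range fun i : Fin q => s(u, c i)) ∪ {s(p, u)}) \ {s(u, c j)})) (c j))
            s(u, c j))
          (g0bar (compG (T.deleteEdges (((Set.range fun i : Fin q => s(u, c i)) ∪ {s(p, u)}) \ {s(u, c j)})) (c j))
            s(u, c j)) :=
  stmt16_general T hT p u q c hcinj hcp hnbr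
end

section
/- Let e be a leaf edge of a tree T. Then there exists a total edge dominating set of T containing e if and only if T ≠ K₂; and there exists a total edge dominating set of T not containing e if and only if T has at least 3 edges. -/
open SimpleGraph

variable {V : Type*}

/-!
In a connected graph with at least two edges every edge meets another one, so the whole edge set
is a total edge dominating set. For a leaf edge `vu` (with `v` the leaf) and at least three edges,
even the edges other than `vu` dominate totally: an edge through `u` that met no edge besides
`vu` would confine the graph to a path `v - u - w` with two edges, while an edge avoiding `u` cannot
meet `vu` at all. Conversely, a total edge dominating set needs a second edge to dominate `e`,
and a third one to dominate that edge when `e` itself is excluded.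
-/

namespace SimpleGraph

variable {G : SimpleGraph V} {F : Set (Sym2 V)} {e g : Sym2 V} {u v w : V}

lemma eAdj_mk_mk_left {a b c : V} (h : b ≠ c) : eAdj s(a, b) s(a, c) :=
  ⟨fun h' ↦ h (Sym2.congr_right.mp h'), a, Sym2.mem_mk_left a b, Sym2.mem_mk_left a c⟩

lemma Preconnected.mem_of_adj_closed (hG : G.Preconnected) {S : Set V}
    (hS : ∀ x ∈ S, ∀ y, G.Adj x y → y ∈ S) (hu : u ∈ S) (x : V) : x ∈ S := by
  by_contra hx
  obtain ⟨p⟩ := hG u x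
  obtain ⟨d, -, hd, hd'⟩ := p.exists_boundary_dart S hu hx
  exact hd' (hS _ hd _ d.adj)

lemma Preconnected.edgeSet_subset_pair (hG : G.Preconnected)
    (hu : ∀ x, G.Adj u x → x = v ∨ x = w) (hv : ∀ x, G.Adj v x → x = u)
    (hw : ∀ x, G.Adj w x → x = u) : G.edgeSet ⊆ {s(u, v), s(u, w)} := by
  have hS : ∀ x ∈ ({u, v, w} : Set V), ∀ y, G.Adj x y → y ∈ ({u, v, w} : Set V) := by
    rintro x (rfl | rfl | rfl) y hy
    · rcases hu y hy with rfl | rfl <;> simp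
    · simp [hv y hy]
    · simp [hw y hy]
  intro f hf
  induction f using Sym2.ind with
  | _ c d =>
    rw [mem_edgeSet] at hf
    rcases hG.mem_of_adj_closed hS (Set.mem_insert u _) c with rfl | rfl | rfl
    · rcases hu d hf with rfl | rfl <;> simp
    · simp [hv d hf, Sym2.eq_swap]
    · simp [hw d hf, Sym2.eq_swap]

lemma Preconnected.exists_eAdj (hG : G.Preconnected) (hg : g ∈ G.edgeSet)
    (hne : G.edgeSet ≠ {g}) : ∃ f ∈ G.edgeSet, eAdj g f := by
  induction g using Sym2.ind with
  | _ a b =>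
    by_contra! h
    have ha : ∀ x, G.Adj a x → x = b := fun x hx ↦ by
      by_contra hxb
      exact h _ hx (eAdj_mk_mk_left (Ne.symm hxb))
    have hb : ∀ x, G.Adj b x → x = a := fun x hx ↦ by
      by_contra hxa
      exact h _ hx (by rw [Sym2.eq_swap]; exact eAdj_mk_mk_left (Ne.symm hxa))
    have hsub := hG.edgeSet_subset_pair (fun x hx ↦ Or.inl (ha x hx)) hb hb
    rw [Set.pair_eq_singleton] at hsub
    exact hne (hsub.antisymm (Set.singleton_subset_iff.mpr hg))

lemma isTEDS_edgeSet_s17 (hG : G.Preconnected) (he : e ∈ G.edgeSet) (hne : G.edgeSet ≠ {e}) :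
    IsTEDS G G.edgeSet := by
  refine ⟨subset_rfl, fun g hg ↦ hG.exists_eAdj hg fun hG' ↦ hne ?_⟩
  rw [hG'] at he ⊢
  rw [Set.mem_singleton_iff.mp he]

lemma IsTEDS.edgeSet_ne_singleton (hF : IsTEDS G F) (he : e ∈ G.edgeSet) :
    G.edgeSet ≠ {e} := by
  intro h
  obtain ⟨f, hf, hef⟩ := hF.2 e he
  exact hef.1 (Set.mem_singleton_iff.mp (h ▸ hF.1 hf)).symm

/-- An edge outside `F` is dominated by some `f ∈ F`, which is in turn dominated by some
`f' ∈ F`; these three edges are distinct. -/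
lemma IsTEDS.three_le_ncard_edgeSet [Finite V] (hF : IsTEDS G F) (he : e ∈ G.edgeSet)
    (heF : e ∉ F) : 3 ≤ G.edgeSet.ncard := by
  obtain ⟨f, hf, hef⟩ := hF.2 e he
  obtain ⟨f', hf', hff'⟩ := hF.2 f (hF.1 hf)
  have hef' : e ≠ f' := fun h ↦ heF (h ▸ hf')
  have hsub : ({e, f, f'} : Set (Sym2 V)) ⊆ G.edgeSet := by
    rintro x (rfl | rfl | rfl)
    exacts [he, hF.1 hf, hF.1 hf']
  calc 3 = ({e, f, f'} : Set (Sym2 V)).ncard := by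
        rw [Set.ncard_insert_of_notMem (by simp [hef.1, hef']),
          Set.ncard_pair hff'.1]
    _ ≤ G.edgeSet.ncard := Set.ncard_le_ncard hsub

lemma Preconnected.exists_eAdj_ne_of_leaf (hG : G.Preconnected) (hvu : G.Adj v u)
    (hv : ∀ x, G.Adj v x → x = u) (h3 : 3 ≤ G.edgeSet.ncard) (hg : g ∈ G.edgeSet) :
    ∃ f ∈ G.edgeSet, f ≠ s(v, u) ∧ eAdj g f := by
  have hne : ∀ e, G.edgeSet ≠ {e} := fun e h ↦ by simp [h] at h3
  by_cases hug : u ∈ g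
  · obtain ⟨w, rfl⟩ := Sym2.mem_iff_exists.mp hug
    by_contra! h
    have hu : ∀ x, G.Adj u x → x = v ∨ x = w := fun x hx ↦ by
      by_contra! hx'
      exact h _ hx (by simp [hx'.1, hvu.ne']) (eAdj_mk_mk_left (Ne.symm hx'.2))
    have hw : ∀ x, G.Adj w x → x = u := fun x hx ↦ by
      by_cases hwv : w = v
      · exact hv x (hwv ▸ hx)
      by_contra hxu
      refine h s(w, x) hx (by simp [hwv, (G.mem_edgeSet.mp hg).ne']) ?_
      rw [Sym2.eq_swap]
      exact eAdj_mk_mk_left (Ne.symm hxu)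
    have h2 := Set.ncard_le_ncard (hG.edgeSet_subset_pair hu hv hw)
    have := Set.ncard_insert_le s(u, v) {s(u, w)}
    rw [Set.ncard_singleton] at this
    omega
  · obtain ⟨f, hf, hgf⟩ := hG.exists_eAdj hg (hne g)
    refine ⟨f, hf, ?_, hgf⟩
    rintro rfl
    obtain ⟨-, z, hzg, hzf⟩ := hgf
    rcases Sym2.mem_iff.mp hzf with rfl | rfl
    · obtain ⟨y, rfl⟩ := Sym2.mem_iff_exists.mp hzg
      exact hug (hv y (G.mem_edgeSet.mp hg) ▸ Sym2.mem_mk_right _ _)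
    · exact hug hzg

lemma isTEDS_edgeSet_diff_leaf (hG : G.Preconnected) (hvu : G.Adj v u)
    (hv : ∀ x, G.Adj v x → x = u) (h3 : 3 ≤ G.edgeSet.ncard) :
    IsTEDS G (G.edgeSet \ {s(v, u)}) := by
  refine ⟨Set.sdiff_subset, fun g hg ↦ ?_⟩
  obtain ⟨f, hf, hfe, hgf⟩ := hG.exists_eAdj_ne_of_leaf hvu hv h3 hg
  exact ⟨f, ⟨hf, hfe⟩, hgf⟩

end SimpleGraph

theorem stmt17_general {V : Type*} [Fintype V] (T : SimpleGraph V) [DecidableRel T.Adj]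
    (hT : T.IsTree) (e : Sym2 V) (he : e ∈ T.edgeSet)
    (hleaf : ∃ v ∈ e, T.degree v = 1) :
    ((∃ F : Set (Sym2 V), IsTEDS T F ∧ e ∈ F) ↔ T.edgeSet ≠ {e}) ∧
    ((∃ F : Set (Sym2 V), IsTEDS T F ∧ e ∉ F) ↔ 3 ≤ T.edgeSet.ncard) := by
  have hG := hT.connected.preconnected
  obtain ⟨v, hve, hdeg⟩ := hleaf
  obtain ⟨u, hvu, hv⟩ := degree_eq_one_iff_existsUnique_adj.mp hdeg
  obtain ⟨y, rfl⟩ := Sym2.mem_iff_exists.mp hve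
  obtain rfl : y = u := hv y (T.mem_edgeSet.mp he)
  refine ⟨⟨fun ⟨F, hF, _⟩ ↦ hF.edgeSet_ne_singleton he,
      fun hne ↦ ⟨_, isTEDS_edgeSet_s17 hG he hne, he⟩⟩,
    ⟨fun ⟨F, hF, heF⟩ ↦ hF.three_le_ncard_edgeSet he heF,
      fun h3 ↦ ⟨_, isTEDS_edgeSet_diff_leaf hG hvu hv h3, fun h ↦ h.2 rfl⟩⟩⟩

theorem stmt17 {V : Type*} [Fintype V] [DecidableEq V] (T : SimpleGraph V) [DecidableRel T.Adj]
    (hT : T.IsTree) (e : Sym2 V) (he : e ∈ T.edgeSet)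
    (hleaf : ∃ v ∈ e, T.degree v = 1) :
    ((∃ F : Set (Sym2 V), IsTEDS T F ∧ e ∈ F) ↔ T.edgeSet ≠ {e}) ∧
    ((∃ F : Set (Sym2 V), IsTEDS T F ∧ e ∉ F) ↔ 3 ≤ T.edgeSet.ncard) :=
  stmt17_general T hT e he hleaf
end
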